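/- arXiv:2408.14015 — 8 statements merged into one kernel-verified Lean document; each statement's English description precedes it below -/
import Mathlib

section
/- Let p0, p1 be probability densities with respect to a measure μ, and for c > 0 define f(c) = P0[p1/p0 < c] + (1/c)·P1[p1/p0 ≥ c], where Pj is the probability measure with density pj. Then for any 0 < c and δ > 0, one has -δ/(c(c+δ)) ≤ f(c+δ) - f(c) ≤ -(δ/(c(c+δ)))·P1[p1/p0 ≥ c+δ]. In particular, f is continuous and nonincreasing on (0,∞). -/
open MeasureTheory ENNReal Set

/-- Huber's function `f(c) = P0[p1/p0 < c] + (1/c)·P1[p1/p0 ≥ c]` satisfies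
`-δ/(c(c+δ)) ≤ f(c+δ) - f(c) ≤ -(δ/(c(c+δ)))·P1[p1/p0 ≥ c+δ]` for `c, δ > 0`;
in particular `f` is continuous and nonincreasing on `(0,∞)`. -/
theorem stmt0 (μ : Measure ℝ) [SigmaFinite μ] (p0 p1 : ℝ → ℝ≥0∞)
    (hm0 : Measurable p0) (hm1 : Measurable p1)
    (hp0 : ∫⁻ x, p0 x ∂μ = 1) (hp1 : ∫⁻ x, p1 x ∂μ = 1)
    (f : ℝ → ℝ)
    (hf : ∀ c, 0 < c → f c =
      ((μ.withDensity p0) {x | p1 x / p0 x < ENNReal.ofReal c}).toReal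
        + (1 / c) * ((μ.withDensity p1) {x | ENNReal.ofReal c ≤ p1 x / p0 x}).toReal) :
    (∀ c, 0 < c → ∀ δ, 0 < δ →
      -(δ / (c * (c + δ))) ≤ f (c + δ) - f c ∧
      f (c + δ) - f c ≤ -(δ / (c * (c + δ)))
        * ((μ.withDensity p1) {x | ENNReal.ofReal (c + δ) ≤ p1 x / p0 x}).toReal)
    ∧ ContinuousOn f (Ioi 0) ∧ AntitoneOn f (Ioi 0) := by
  have hrm : Measurable fun x => p1 x / p0 x := hm1.div hm0
  have h0univ : μ.withDensity p0 univ = 1 := by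
    rw [withDensity_apply _ MeasurableSet.univ, Measure.restrict_univ]; exact hp0
  have h1univ : μ.withDensity p1 univ = 1 := by
    rw [withDensity_apply _ MeasurableSet.univ, Measure.restrict_univ]; exact hp1
  have hfin0 : ∀ s : Set ℝ, μ.withDensity p0 s ≠ ∞ := fun s =>
    ((measure_mono (subset_univ s)).trans_lt (by rw [h0univ]; exact one_lt_top)).ne
  have hfin1 : ∀ s : Set ℝ, μ.withDensity p1 s ≠ ∞ := fun s =>
    ((measure_mono (subset_univ s)).trans_lt (by rw [h1univ]; exact one_lt_top)).ne
  have hle1 : ∀ s : Set ℝ, μ.withDensity p1 s ≤ 1 := fun s =>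
    h1univ ▸ measure_mono (subset_univ s)
  have key : ∀ c, 0 < c → ∀ δ, 0 < δ →
      -(δ / (c * (c + δ))) ≤ f (c + δ) - f c ∧
      f (c + δ) - f c ≤ -(δ / (c * (c + δ)))
        * ((μ.withDensity p1) {x | ENNReal.ofReal (c + δ) ≤ p1 x / p0 x}).toReal := by
    intro c hc δ hδ
    have hd : (0:ℝ) < c + δ := by linarith
    set Ac := {x | p1 x / p0 x < ENNReal.ofReal c} with hAc_def
    set Ad := {x | p1 x / p0 x < ENNReal.ofReal (c+δ)} with hAd_def
    set Sc := {x | ENNReal.ofReal c ≤ p1 x / p0 x} with hSc_def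
    set Sd := {x | ENNReal.ofReal (c+δ) ≤ p1 x / p0 x} with hSd_def
    set B := Ad ∩ Sc with hB_def
    have hAc_m : MeasurableSet Ac := measurableSet_lt hrm measurable_const
    have hAd_m : MeasurableSet Ad := measurableSet_lt hrm measurable_const
    have hSc_m : MeasurableSet Sc := measurableSet_le measurable_const hrm
    have hSd_m : MeasurableSet Sd := measurableSet_le measurable_const hrm
    have hB_m : MeasurableSet B := hAd_m.inter hSc_m
    have hAcd : Ad = Ac ∪ B := by
      ext x
      simp only [hAc_def, hAd_def, hSc_def, hB_def, mem_union, mem_inter_iff, mem_setOf_eq]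
      constructor
      · intro h
        rcases lt_or_ge (p1 x / p0 x) (ENNReal.ofReal c) with h' | h'
        · exact Or.inl h'
        · exact Or.inr ⟨h, h'⟩
      · rintro (h | ⟨h, -⟩)
        · exact h.trans_le (ENNReal.ofReal_le_ofReal (by linarith))
        · exact h
    have hScd : Sc = Sd ∪ B := by
      ext x
      simp only [hSc_def, hSd_def, hAd_def, hB_def, mem_union, mem_inter_iff, mem_setOf_eq]
      constructor
      · intro h
        rcases lt_or_ge (p1 x / p0 x) (ENNReal.ofReal (c+δ)) with h' | h'
        · exact Or.inr ⟨h', h⟩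
        · exact Or.inl h'
      · rintro (h | ⟨-, h⟩)
        · exact (ENNReal.ofReal_le_ofReal (by linarith)).trans h
        · exact h
    have disj0 : Disjoint Ac B := by
      rw [Set.disjoint_left]
      intro x hx hx'
      simp only [hAc_def, mem_setOf_eq] at hx
      simp only [hB_def, hSc_def, mem_inter_iff, mem_setOf_eq] at hx'
      exact absurd hx'.2 (not_le.mpr hx)
    have disj1 : Disjoint Sd B := by
      rw [Set.disjoint_left]
      intro x hx hx'
      simp only [hSd_def, mem_setOf_eq] at hx
      simp only [hB_def, hAd_def, mem_inter_iff, mem_setOf_eq] at hx'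
      exact absurd hx (not_le.mpr hx'.1)
    have e0' : μ.withDensity p0 Ad = μ.withDensity p0 Ac + μ.withDensity p0 B := by
      rw [hAcd]; exact measure_union disj0 hB_m
    have e1' : μ.withDensity p1 Sc = μ.withDensity p1 Sd + μ.withDensity p1 B := by
      rw [hScd]; exact measure_union disj1 hB_m
    have hlow : ENNReal.ofReal c * μ.withDensity p0 B ≤ μ.withDensity p1 B := by
      rw [withDensity_apply _ hB_m, withDensity_apply _ hB_m, ← lintegral_const_mul _ hm0]
      refine setLIntegral_mono' hB_m fun x hx => ?_
      have hxc : ENNReal.ofReal c ≤ p1 x / p0 x := hx.2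
      by_cases ht : p0 x = ∞
      · rw [ht, ENNReal.div_top] at hxc
        exact absurd (le_antisymm hxc zero_le) (ENNReal.ofReal_pos.mpr hc).ne'
      by_cases h0 : p0 x = 0
      · simp [h0]
      · exact (ENNReal.le_div_iff_mul_le (Or.inl h0) (Or.inl ht)).mp hxc
    have hupp : μ.withDensity p1 B ≤ ENNReal.ofReal (c+δ) * μ.withDensity p0 B := by
      rw [withDensity_apply _ hB_m, withDensity_apply _ hB_m, ← lintegral_const_mul _ hm0]
      refine setLIntegral_mono' hB_m fun x hx => ?_
      have hxd : p1 x / p0 x < ENNReal.ofReal (c+δ) := hx.1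
      by_cases ht : p0 x = ∞
      · rw [ht, ENNReal.mul_top (ENNReal.ofReal_pos.mpr hd).ne']
        exact le_top
      by_cases h0 : p0 x = 0
      · by_cases h1 : p1 x = 0
        · simp [h1]
        · rw [h0, ENNReal.div_zero h1] at hxd
          exact absurd hxd not_top_lt
      · exact (ENNReal.div_le_iff_le_mul (Or.inl h0) (Or.inl ht)).mp hxd.le
    have e0r : (μ.withDensity p0 Ad).toReal
        = (μ.withDensity p0 Ac).toReal + (μ.withDensity p0 B).toReal := by
      rw [e0', ENNReal.toReal_add (hfin0 _) (hfin0 _)]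
    have e1r : (μ.withDensity p1 Sc).toReal
        = (μ.withDensity p1 Sd).toReal + (μ.withDensity p1 B).toReal := by
      rw [e1', ENNReal.toReal_add (hfin1 _) (hfin1 _)]
    have rlow : c * (μ.withDensity p0 B).toReal ≤ (μ.withDensity p1 B).toReal := by
      have h := ENNReal.toReal_mono (hfin1 B) hlow
      rwa [ENNReal.toReal_mul, ENNReal.toReal_ofReal hc.le] at h
    have rupp : (μ.withDensity p1 B).toReal ≤ (c+δ) * (μ.withDensity p0 B).toReal := by
      have h := ENNReal.toReal_mono (ENNReal.mul_ne_top ENNReal.ofReal_ne_top (hfin0 B)) hupp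
      rwa [ENNReal.toReal_mul, ENNReal.toReal_ofReal hd.le] at h
    have rsum : (μ.withDensity p1 Sd).toReal + (μ.withDensity p1 B).toReal ≤ 1 := by
      have h := ENNReal.toReal_mono ENNReal.one_ne_top (hle1 Sc)
      rw [ENNReal.toReal_one, e1r] at h
      linarith
    have hfc := hf c hc
    have hfd := hf (c+δ) hd
    rw [← hAc_def, ← hSc_def] at hfc
    rw [← hAd_def, ← hSd_def] at hfd
    have hc' : c ≠ 0 := hc.ne'
    have hd' : c + δ ≠ 0 := hd.ne'
    have hdiff : f (c+δ) - f c = (μ.withDensity p0 B).toReal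
        - (1/c) * (μ.withDensity p1 B).toReal
        - (δ/(c*(c+δ))) * (μ.withDensity p1 Sd).toReal := by
      rw [hfd, hfc, e0r, e1r]
      field_simp
      ring
    constructor
    · rw [hdiff]
      have hq : (0:ℝ) < δ/(c*(c+δ)) := by positivity
      have hkey : (μ.withDensity p1 B).toReal / (c+δ) ≤ (μ.withDensity p0 B).toReal := by
        rw [div_le_iff₀ hd]
        nlinarith [rupp]
      have hident : (μ.withDensity p1 B).toReal/(c+δ) - (1/c)*(μ.withDensity p1 B).toReal
          = -(δ/(c*(c+δ)))*(μ.withDensity p1 B).toReal := by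
        field_simp
        ring
      nlinarith [hkey, hident,
        mul_nonneg hq.le (by linarith [rsum] :
          (0:ℝ) ≤ 1 - (μ.withDensity p1 Sd).toReal - (μ.withDensity p1 B).toReal)]
    · rw [hdiff]
      have hb : (μ.withDensity p0 B).toReal ≤ (μ.withDensity p1 B).toReal / c :=
        (le_div_iff₀ hc).mpr (by nlinarith [rlow])
      have hb' : (μ.withDensity p1 B).toReal / c = (1/c) * (μ.withDensity p1 B).toReal := by
        ring
      linarith
  refine ⟨key, ?_, ?_⟩
  · -- continuity
    have hbound : ∀ c, 0 < c → ∀ δ, 0 < δ → |f (c + δ) - f c| ≤ δ / (c * (c + δ)) := by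
      intro c hc δ hδ
      obtain ⟨h1, h2⟩ := key c hc δ hδ
      have hq : (0:ℝ) ≤ δ / (c * (c + δ)) := by positivity
      have h3 : -(δ / (c * (c + δ)))
          * ((μ.withDensity p1) {x | ENNReal.ofReal (c + δ) ≤ p1 x / p0 x}).toReal ≤ 0 :=
        mul_nonpos_of_nonpos_of_nonneg (neg_nonpos.mpr hq) ENNReal.toReal_nonneg
      exact abs_le.mpr ⟨h1, by linarith⟩
    intro a ha
    simp only [mem_Ioi] at ha
    rw [Metric.continuousWithinAt_iff]
    intro ε hε
    refine ⟨min (a/2) (ε * a^2 / 4), by positivity, fun y hy hdist => ?_⟩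
    simp only [mem_Ioi] at hy
    rw [Real.dist_eq] at hdist ⊢
    have hd1 : |y - a| < a/2 := lt_of_lt_of_le hdist (min_le_left _ _)
    have hd2 : |y - a| < ε * a^2 / 4 := lt_of_lt_of_le hdist (min_le_right _ _)
    rcases lt_trichotomy y a with hlt | heq | hgt
    · -- y < a : a = y + (a - y)
      have hδ' : 0 < a - y := by linarith
      have hb := hbound y hy (a - y) hδ'
      rw [show y + (a - y) = a by ring] at hb
      have habs : |y - a| = a - y := by rw [abs_of_nonpos (by linarith)]; ring
      rw [habs] at hd1 hd2
      have hya : a/2 < y := by linarith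
      have hlt2 : (a - y) / (y * a) < ε := by
        rw [div_lt_iff₀ (by positivity)]
        nlinarith [mul_nonneg (mul_nonneg hε.le ha.le) (by linarith : (0:ℝ) ≤ y - a/2),
          mul_pos (mul_pos hε ha) ha]
      calc |f y - f a| = |f a - f y| := abs_sub_comm _ _
        _ ≤ (a - y) / (y * a) := hb
        _ < ε := hlt2
    · simp [heq, hε]
    · have hδ' : 0 < y - a := by linarith
      have hb := hbound a ha (y - a) hδ'
      rw [show a + (y - a) = y by ring] at hb
      have habs : |y - a| = y - a := abs_of_nonneg (by linarith)
      rw [habs] at hd1 hd2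
      have hlt2 : (y - a) / (a * y) < ε := by
        rw [div_lt_iff₀ (by positivity)]
        nlinarith [mul_nonneg (mul_nonneg hε.le ha.le) (by linarith : (0:ℝ) ≤ y - a),
          mul_pos (mul_pos hε ha) ha]
      calc |f y - f a| ≤ (y - a) / (a * y) := hb
        _ < ε := hlt2
  · -- antitone
    intro a ha b hb hab
    simp only [mem_Ioi] at ha hb
    rcases eq_or_lt_of_le hab with rfl | hlt
    · exact le_refl _
    · have hδ : 0 < b - a := by linarith
      have h2 := (key a ha (b - a) hδ).2
      rw [show a + (b - a) = b by ring] at h2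
      have hq : (0:ℝ) ≤ (b - a) / (a * b) := by positivity
      have h3 : -((b - a) / (a * b))
          * ((μ.withDensity p1) {x | ENNReal.ofReal b ≤ p1 x / p0 x}).toReal ≤ 0 :=
        mul_nonpos_of_nonpos_of_nonneg (neg_nonpos.mpr hq) ENNReal.toReal_nonneg
      linarith
end

section
/- Let f(c) = P0[p1/p0 < c] + (1/c)·P1[p1/p0 ≥ c] and let c0 = ess sup_μ (p1/p0). If c0 < ∞, then f(c) = 1 for all c ≥ c0, and f is strictly decreasing on (0, c0). If c0 = ∞, then f is strictly decreasing on (0,∞) and lim_{c→∞} f(c) = 1. -/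
open MeasureTheory ENNReal Set Filter

section Stmt1Aux

variable {μ : Measure ℝ} {p0 p1 : ℝ → ℝ≥0∞}

lemma stmt1_fin (hm0 : Measurable p0) (hp0 : ∫⁻ x, p0 x ∂μ = 1) :
    ∀ᵐ x ∂μ, p0 x ≠ ⊤ :=
  (ae_lt_top hm0 (by rw [hp0]; exact one_ne_top)).mono fun _ h => h.ne

lemma stmt1_key_ge (hm0 : Measurable p0) (hfin : ∀ᵐ x ∂μ, p0 x ≠ ⊤)
    {c : ℝ} {S : Set ℝ} (hS : MeasurableSet S)
    (hSsub : ∀ x ∈ S, ENNReal.ofReal c ≤ p1 x / p0 x) :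
    ENNReal.ofReal c * μ.withDensity p0 S ≤ μ.withDensity p1 S := by
  rw [withDensity_apply _ hS, withDensity_apply _ hS, ← lintegral_const_mul _ hm0]
  refine lintegral_mono_ae ?_
  filter_upwards [ae_restrict_of_ae hfin, ae_restrict_mem hS] with x hfx hxS
  rcases eq_or_ne (p0 x) 0 with h0 | h0
  · simp [h0]
  · exact (ENNReal.le_div_iff_mul_le (Or.inl h0) (Or.inl hfx)).1 (hSsub x hxS)

lemma stmt1_key_le (hm0 : Measurable p0) (hfin : ∀ᵐ x ∂μ, p0 x ≠ ⊤)
    {c : ℝ} (hc : essSup (fun x => p1 x / p0 x) μ ≤ ENNReal.ofReal c)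
    {S : Set ℝ} (hS : MeasurableSet S) :
    μ.withDensity p1 S ≤ ENNReal.ofReal c * μ.withDensity p0 S := by
  rw [withDensity_apply _ hS, withDensity_apply _ hS, ← lintegral_const_mul _ hm0]
  refine lintegral_mono_ae ?_
  have hae : ∀ᵐ x ∂μ, p1 x / p0 x ≤ ENNReal.ofReal c :=
    (ENNReal.ae_le_essSup _).mono fun x hx => hx.trans hc
  filter_upwards [ae_restrict_of_ae hfin, ae_restrict_of_ae hae] with x hfx hx
  exact (ENNReal.div_le_iff_le_mul (Or.inr ENNReal.ofReal_ne_top) (Or.inl hfx)).1 hx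

lemma stmt1_pos (hm0 : Measurable p0) (hm1 : Measurable p1)
    {c : ℝ} (hlt : ENNReal.ofReal c < essSup (fun x => p1 x / p0 x) μ) :
    0 < μ.withDensity p1 {x | ENNReal.ofReal c ≤ p1 x / p0 x} := by
  set U := {x : ℝ | ENNReal.ofReal c < p1 x / p0 x} with hU
  have hUmeas : MeasurableSet U := measurableSet_lt measurable_const (hm1.div hm0)
  have hUpos : 0 < μ U := by
    rcases eq_or_ne (μ U) 0 with h | h
    · exfalso
      have hle : ∀ᵐ x ∂μ, p1 x / p0 x ≤ ENNReal.ofReal c := by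
        rw [ae_iff]
        simpa [hU, not_le] using h
      exact absurd (essSup_le_of_ae_le _ hle) (not_le.2 hlt)
    · exact h.bot_lt
  have hsub : U ⊆ {x : ℝ | ENNReal.ofReal c ≤ p1 x / p0 x} := fun x hx =>
    show ENNReal.ofReal c ≤ p1 x / p0 x from le_of_lt hx
  refine lt_of_lt_of_le ?_ (measure_mono hsub)
  rw [withDensity_apply _ hUmeas]
  rcases eq_or_ne (∫⁻ x in U, p1 x ∂μ) 0 with h0 | h0
  · exfalso
    rw [lintegral_eq_zero_iff hm1] at h0
    have h0' := (ae_restrict_iff' hUmeas).1 h0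
    have hnm : ∀ᵐ x ∂μ, x ∉ U := by
      refine h0'.mono fun x hx hxU => ?_
      have hne : p1 x ≠ 0 := by
        intro hp
        have hxU' : ENNReal.ofReal c < p1 x / p0 x := hxU
        rw [hp] at hxU'
        simp at hxU'
      exact hne (hx hxU)
    have : μ U = 0 := measure_eq_zero_iff_ae_notMem.2 hnm
    exact hUpos.ne' this
  · exact h0.bot_lt

lemma stmt1_part (hm0 : Measurable p0) (hm1 : Measurable p1) {q : ℝ → ℝ≥0∞}
    (hq : ∫⁻ x, q x ∂μ = 1) (c : ℝ) :
    μ.withDensity q {x | p1 x / p0 x < ENNReal.ofReal c}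
      + μ.withDensity q {x | ENNReal.ofReal c ≤ p1 x / p0 x} = 1 := by
  have hcompl : {x : ℝ | ENNReal.ofReal c ≤ p1 x / p0 x}
      = {x : ℝ | p1 x / p0 x < ENNReal.ofReal c}ᶜ := by
    ext x; simp [not_lt]
  rw [hcompl, measure_add_measure_compl (measurableSet_lt (hm1.div hm0) measurable_const :
      MeasurableSet {x : ℝ | p1 x / p0 x < ENNReal.ofReal c}),
    withDensity_apply _ MeasurableSet.univ, setLIntegral_univ, hq]

end Stmt1Aux

/-- with `f(c) = P0[p1/p0 < c] + (1/c)·P1[p1/p0 ≥ c]` and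
`c0 = ess sup (p1/p0)`: if `c0 < ∞` then `f(c) = 1` for `c ≥ c0` and `f` is strictly
decreasing on `(0, c0)`; if `c0 = ∞` then `f` is strictly decreasing on `(0,∞)` and
`f(c) → 1` as `c → ∞`. -/
theorem stmt1 (μ : Measure ℝ) [SigmaFinite μ] (p0 p1 : ℝ → ℝ≥0∞)
    (hm0 : Measurable p0) (hm1 : Measurable p1)
    (hp0 : ∫⁻ x, p0 x ∂μ = 1) (hp1 : ∫⁻ x, p1 x ∂μ = 1)
    (f : ℝ → ℝ)
    (hf : ∀ c, 0 < c → f c =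
      ((μ.withDensity p0) {x | p1 x / p0 x < ENNReal.ofReal c}).toReal
        + (1 / c) * ((μ.withDensity p1) {x | ENNReal.ofReal c ≤ p1 x / p0 x}).toReal) :
    (essSup (fun x => p1 x / p0 x) μ ≠ ⊤ →
      (∀ c, 0 < c → (essSup (fun x => p1 x / p0 x) μ).toReal ≤ c → f c = 1) ∧
      StrictAntiOn f (Ioo 0 (essSup (fun x => p1 x / p0 x) μ).toReal))
    ∧ (essSup (fun x => p1 x / p0 x) μ = ⊤ →
      StrictAntiOn f (Ioi 0) ∧ Tendsto f atTop (nhds 1)) := by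
  haveI hFin0 : IsFiniteMeasure (μ.withDensity p0) :=
    isFiniteMeasure_withDensity (by rw [hp0]; exact one_ne_top)
  haveI hFin1 : IsFiniteMeasure (μ.withDensity p1) :=
    isFiniteMeasure_withDensity (by rw [hp1]; exact one_ne_top)
  have hfin : ∀ᵐ x ∂μ, p0 x ≠ ⊤ := stmt1_fin hm0 hp0
  have hLmeas : Measurable fun x => p1 x / p0 x := hm1.div hm0
  have hSmeas : ∀ c : ℝ, MeasurableSet {x : ℝ | ENNReal.ofReal c ≤ p1 x / p0 x} :=
    fun c => measurableSet_le measurable_const hLmeas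
  have hTmeas : ∀ c : ℝ, MeasurableSet {x : ℝ | p1 x / p0 x < ENNReal.ofReal c} :=
    fun c => measurableSet_lt hLmeas measurable_const
  -- key strict-antitonicity step
  have key : ∀ c c' : ℝ, 0 < c → c < c' →
      ENNReal.ofReal c' < essSup (fun x => p1 x / p0 x) μ → f c' < f c := by
    intro c c' hc hcc' hlt
    have hc' : 0 < c' := hc.trans hcc'
    set M : Set ℝ := {x | ENNReal.ofReal c ≤ p1 x / p0 x}
      ∩ {x | p1 x / p0 x < ENNReal.ofReal c'} with hM
    have hMmeas : MeasurableSet M := (hSmeas c).inter (hTmeas c')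
    have hle : ENNReal.ofReal c ≤ ENNReal.ofReal c' := ENNReal.ofReal_le_ofReal hcc'.le
    have hSdecomp : {x : ℝ | ENNReal.ofReal c ≤ p1 x / p0 x}
        = {x : ℝ | ENNReal.ofReal c' ≤ p1 x / p0 x} ∪ M := by
      ext x
      simp only [hM, mem_setOf_eq, mem_union, mem_inter_iff]
      constructor
      · intro h
        rcases lt_or_ge (p1 x / p0 x) (ENNReal.ofReal c') with h' | h'
        · exact Or.inr ⟨h, h'⟩
        · exact Or.inl h'
      · rintro (h | ⟨h, _⟩)
        · exact hle.trans h
        · exact h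
    have hTdecomp : {x : ℝ | p1 x / p0 x < ENNReal.ofReal c'}
        = {x : ℝ | p1 x / p0 x < ENNReal.ofReal c} ∪ M := by
      ext x
      simp only [hM, mem_setOf_eq, mem_union, mem_inter_iff]
      constructor
      · intro h
        rcases lt_or_ge (p1 x / p0 x) (ENNReal.ofReal c) with h' | h'
        · exact Or.inl h'
        · exact Or.inr ⟨h', h⟩
      · rintro (h | ⟨_, h⟩)
        · exact lt_of_lt_of_le h hle
        · exact h
    have hSdisj : Disjoint {x : ℝ | ENNReal.ofReal c' ≤ p1 x / p0 x} M := by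
      rw [Set.disjoint_left]
      rintro x hx ⟨_, hx2⟩
      exact absurd (show ENNReal.ofReal c' ≤ p1 x / p0 x from hx)
        (not_le.2 (show p1 x / p0 x < ENNReal.ofReal c' from hx2))
    have hTdisj : Disjoint {x : ℝ | p1 x / p0 x < ENNReal.ofReal c} M := by
      rw [Set.disjoint_left]
      rintro x hx ⟨hx1, _⟩
      exact absurd (show ENNReal.ofReal c ≤ p1 x / p0 x from hx1)
        (not_le.2 (show p1 x / p0 x < ENNReal.ofReal c from hx))
    have e1 : μ.withDensity p0 {x | p1 x / p0 x < ENNReal.ofReal c'}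
        = μ.withDensity p0 {x | p1 x / p0 x < ENNReal.ofReal c} + μ.withDensity p0 M := by
      rw [hTdecomp, measure_union hTdisj hMmeas]
    have e2 : μ.withDensity p1 {x | ENNReal.ofReal c ≤ p1 x / p0 x}
        = μ.withDensity p1 {x | ENNReal.ofReal c' ≤ p1 x / p0 x} + μ.withDensity p1 M := by
      rw [hSdecomp, measure_union hSdisj hMmeas]
    have hbpos : 0 < (μ.withDensity p1 {x | ENNReal.ofReal c' ≤ p1 x / p0 x}).toReal :=
      ENNReal.toReal_pos (stmt1_pos hm0 hm1 hlt).ne' (measure_ne_top _ _)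
    have hmge : ENNReal.ofReal c * μ.withDensity p0 M ≤ μ.withDensity p1 M :=
      stmt1_key_ge hm0 hfin hMmeas (fun x hx => hx.1)
    have hm : c * (μ.withDensity p0 M).toReal ≤ (μ.withDensity p1 M).toReal := by
      have := ENNReal.toReal_mono (measure_ne_top _ _) hmge
      rwa [ENNReal.toReal_mul, ENNReal.toReal_ofReal hc.le] at this
    rw [hf c hc, hf c' hc', e1, e2, ENNReal.toReal_add (measure_ne_top _ _) (measure_ne_top _ _),
      ENNReal.toReal_add (measure_ne_top _ _) (measure_ne_top _ _)]
    set a := (μ.withDensity p0 {x | p1 x / p0 x < ENNReal.ofReal c}).toReal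
    set m0 := (μ.withDensity p0 M).toReal
    set b' := (μ.withDensity p1 {x | ENNReal.ofReal c' ≤ p1 x / p0 x}).toReal
    set m1 := (μ.withDensity p1 M).toReal
    have h1 : m0 ≤ 1 / c * m1 := by
      have h2 : 1 / c * (c * m0) ≤ 1 / c * m1 :=
        mul_le_mul_of_nonneg_left hm (by positivity)
      calc m0 = 1 / c * (c * m0) := by field_simp
        _ ≤ 1 / c * m1 := h2
    have h3 : 1 / c' * b' < 1 / c * b' :=
      mul_lt_mul_of_pos_right (one_div_lt_one_div_of_lt hc hcc') hbpos
    have h4 : 1 / c * (b' + m1) = 1 / c * b' + 1 / c * m1 := mul_add _ _ _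
    linarith
  constructor
  · intro hc0
    constructor
    · -- f c = 1 for c ≥ c0
      intro c hcpos hcge
      have hle : essSup (fun x => p1 x / p0 x) μ ≤ ENNReal.ofReal c := by
        rw [← ENNReal.ofReal_toReal hc0]
        exact ENNReal.ofReal_le_ofReal hcge
      have hBeq : μ.withDensity p1 {x | ENNReal.ofReal c ≤ p1 x / p0 x}
          = ENNReal.ofReal c * μ.withDensity p0 {x | ENNReal.ofReal c ≤ p1 x / p0 x} :=
        le_antisymm (stmt1_key_le hm0 hfin hle (hSmeas c))
          (stmt1_key_ge hm0 hfin (hSmeas c) (fun x hx => hx))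
      have hsum : (μ.withDensity p0 {x | p1 x / p0 x < ENNReal.ofReal c}).toReal
          + (μ.withDensity p0 {x | ENNReal.ofReal c ≤ p1 x / p0 x}).toReal = 1 := by
        rw [← ENNReal.toReal_add (measure_ne_top _ _) (measure_ne_top _ _),
          stmt1_part hm0 hm1 hp0 c]
        exact ENNReal.toReal_one
      rw [hf c hcpos, hBeq, ENNReal.toReal_mul, ENNReal.toReal_ofReal hcpos.le]
      have hcne : c ≠ 0 := hcpos.ne'
      field_simp
      linarith
    · -- strict anti on Ioo
      intro x hx y hy hxy
      refine key x y hx.1 hxy ?_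
      rw [← ENNReal.ofReal_toReal hc0]
      exact (ENNReal.ofReal_lt_ofReal_iff (ENNReal.toReal_pos (by
        intro h; rw [h] at hy; simpa using hy.2.trans' hy.1 : essSup (fun x => p1 x / p0 x) μ ≠ 0)
        hc0)).2 hy.2
  · intro hc0
    constructor
    · intro x hx y hy hxy
      exact key x y hx hxy (by rw [hc0]; exact ENNReal.ofReal_lt_top)
    · -- tendsto
      have hlb : ∀ c : ℝ, 0 < c → 1 ≤ f c := by
        intro c hc
        rw [hf c hc]
        have h1 : ENNReal.ofReal c * μ.withDensity p0 {x | ENNReal.ofReal c ≤ p1 x / p0 x}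
            ≤ μ.withDensity p1 {x | ENNReal.ofReal c ≤ p1 x / p0 x} :=
          stmt1_key_ge hm0 hfin (hSmeas c) (fun x hx => hx)
        have h2 : c * (μ.withDensity p0 {x | ENNReal.ofReal c ≤ p1 x / p0 x}).toReal
            ≤ (μ.withDensity p1 {x | ENNReal.ofReal c ≤ p1 x / p0 x}).toReal := by
          have := ENNReal.toReal_mono (measure_ne_top _ _) h1
          rwa [ENNReal.toReal_mul, ENNReal.toReal_ofReal hc.le] at this
        have hsum : (μ.withDensity p0 {x | p1 x / p0 x < ENNReal.ofReal c}).toReal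
            + (μ.withDensity p0 {x | ENNReal.ofReal c ≤ p1 x / p0 x}).toReal = 1 := by
          rw [← ENNReal.toReal_add (measure_ne_top _ _) (measure_ne_top _ _),
            stmt1_part hm0 hm1 hp0 c]
          exact ENNReal.toReal_one
        have h5 : 1 / c * (c * (μ.withDensity p0 {x | ENNReal.ofReal c ≤ p1 x / p0 x}).toReal)
            ≤ 1 / c * (μ.withDensity p1 {x | ENNReal.ofReal c ≤ p1 x / p0 x}).toReal :=
          mul_le_mul_of_nonneg_left h2 (by positivity)
        have h6 : 1 / c * (c * (μ.withDensity p0 {x | ENNReal.ofReal c ≤ p1 x / p0 x}).toReal)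
            = (μ.withDensity p0 {x | ENNReal.ofReal c ≤ p1 x / p0 x}).toReal := by
          field_simp
        linarith
      have hub : ∀ c : ℝ, 0 < c → f c ≤ 1 + 1 / c := by
        intro c hc
        rw [hf c hc]
        have hT1 : (μ.withDensity p0 {x | p1 x / p0 x < ENNReal.ofReal c}).toReal ≤ 1 := by
          have h := stmt1_part hm0 hm1 hp0 c
          have : μ.withDensity p0 {x | p1 x / p0 x < ENNReal.ofReal c} ≤ 1 :=
            h ▸ self_le_add_right _ _
          simpa using ENNReal.toReal_mono one_ne_top this
        have hB1 : (μ.withDensity p1 {x | ENNReal.ofReal c ≤ p1 x / p0 x}).toReal ≤ 1 := by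
          have h := stmt1_part hm0 hm1 hp1 c
          have : μ.withDensity p1 {x | ENNReal.ofReal c ≤ p1 x / p0 x} ≤ 1 :=
            h ▸ self_le_add_left _ _
          simpa using ENNReal.toReal_mono one_ne_top this
        have : 1 / c * (μ.withDensity p1 {x | ENNReal.ofReal c ≤ p1 x / p0 x}).toReal
            ≤ 1 / c * 1 := mul_le_mul_of_nonneg_left hB1 (by positivity)
        linarith [this]
      have h0 : Tendsto (fun c : ℝ => 1 / c) atTop (nhds 0) := by
        simpa [one_div] using tendsto_inv_atTop_zero (𝕜 := ℝ)
      have htop : Tendsto (fun c : ℝ => 1 + 1 / c) atTop (nhds 1) := by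
        simpa using (tendsto_const_nhds (x := (1 : ℝ)) (f := atTop)).add h0
      exact tendsto_of_tendsto_of_tendsto_of_le_of_le' tendsto_const_nhds htop
        ((eventually_gt_atTop 0).mono fun c hc => hlb c hc)
        ((eventually_gt_atTop 0).mono fun c hc => hub c hc)
end

section
/- Define q_{0,ε}(x) = (1−ε)p0(x) if p1(x)/p0(x) < c'' and q_{0,ε}(x) = (1/c'')(1−ε)p1(x) otherwise, where c'' is chosen so that ∫ q_{0,ε} dμ = 1. Then q_{0,ε} can be written as (1−ε)p0 + εh for a probability density h, and consequently the distribution Q_{0,ε} with density q_{0,ε} satisfies D_TV(P0, Q_{0,ε}) ≤ ε. -/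
open MeasureTheory ENNReal Set

/-- Huber's censored density `q_{0,ε}` (equal to `(1−ε)p0` where `p1/p0 < c''`
and to `(1/c'')(1−ε)p1` elsewhere, normalized to integrate to one) can be written as
`(1−ε)p0 + εh` for a probability density `h`, whence `D_TV(P0, Q_{0,ε}) ≤ ε`. -/
theorem stmt7 (μ : Measure ℝ) [SigmaFinite μ] (p0 p1 : ℝ → ℝ≥0∞)
    (hm0 : Measurable p0) (hm1 : Measurable p1)
    (hp0 : ∫⁻ x, p0 x ∂μ = 1) (hp1 : ∫⁻ x, p1 x ∂μ = 1)
    (ε : ℝ) (hε : ε ∈ Ioo (0:ℝ) 1) (c2 : ℝ) (hc2 : 0 < c2)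
    (q0 : ℝ → ℝ≥0∞)
    (hq0 : ∀ x, q0 x = if p1 x / p0 x < ENNReal.ofReal c2
      then ENNReal.ofReal (1 - ε) * p0 x
      else (ENNReal.ofReal c2)⁻¹ * ENNReal.ofReal (1 - ε) * p1 x)
    (hq0int : ∫⁻ x, q0 x ∂μ = 1) :
    ∃ h : ℝ → ℝ≥0∞, Measurable h ∧ (∫⁻ x, h x ∂μ = 1) ∧
      (∀ᵐ x ∂μ, q0 x = ENNReal.ofReal (1 - ε) * p0 x + ENNReal.ofReal ε * h x) ∧
      (∀ A : Set ℝ, MeasurableSet A →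
        |((μ.withDensity p0) A).toReal - ((μ.withDensity q0) A).toReal| ≤ ε) := by
  set c : ℝ≥0∞ := ENNReal.ofReal c2 with hcdef
  have hc0 : c ≠ 0 := by positivity
  have hct : c ≠ ∞ := ENNReal.ofReal_ne_top
  have hε0 : (0:ℝ) < ε := hε.1
  have hε1 : ε < 1 := hε.2
  have heps0 : ENNReal.ofReal ε ≠ 0 := by
    positivity
  have hepst : ENNReal.ofReal ε ≠ ∞ := ENNReal.ofReal_ne_top
  -- key pointwise inequality
  have key : ∀ x, ENNReal.ofReal (1 - ε) * p0 x ≤ q0 x := by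
    intro x
    rw [hq0 x]
    split_ifs with hx
    · exact le_rfl
    · push_neg at hx
      have hp : c * p0 x ≤ p1 x := by
        by_cases h0 : p0 x = 0
        · simp [h0]
        by_cases ht : p0 x = ∞
        · exfalso
          rw [ht, ENNReal.div_top] at hx
          exact hc0 (le_antisymm hx (zero_le))
        · exact (ENNReal.le_div_iff_mul_le (Or.inl h0) (Or.inl ht)).mp hx
      calc ENNReal.ofReal (1 - ε) * p0 x
          = c⁻¹ * ENNReal.ofReal (1 - ε) * (c * p0 x) := by
            rw [mul_comm (c⁻¹) (ENNReal.ofReal (1 - ε)), mul_assoc, ← mul_assoc c⁻¹ c,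
              ENNReal.inv_mul_cancel hc0 hct, one_mul]
        _ ≤ c⁻¹ * ENNReal.ofReal (1 - ε) * p1 x := mul_le_mul_right hp _
  -- measurability of q0
  have hq0meas : Measurable q0 := by
    have : q0 = fun x => if p1 x / p0 x < c
        then ENNReal.ofReal (1 - ε) * p0 x
        else c⁻¹ * ENNReal.ofReal (1 - ε) * p1 x := funext hq0
    rw [this]
    exact Measurable.ite (measurableSet_lt (hm1.div hm0) measurable_const)
      (measurable_const.mul hm0) (measurable_const.mul hm1)
  set h : ℝ → ℝ≥0∞ := fun x =>
    (ENNReal.ofReal ε)⁻¹ * (q0 x - ENNReal.ofReal (1 - ε) * p0 x) with hhdef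
  have hhm : Measurable h :=
    measurable_const.mul (hq0meas.sub (measurable_const.mul hm0))
  -- integral of the subtrahend
  have hsubint : ∫⁻ x, ENNReal.ofReal (1 - ε) * p0 x ∂μ = ENNReal.ofReal (1 - ε) := by
    rw [lintegral_const_mul _ hm0, hp0, mul_one]
  have hsubfin : ∫⁻ x, ENNReal.ofReal (1 - ε) * p0 x ∂μ ≠ ∞ := by
    rw [hsubint]; exact ENNReal.ofReal_ne_top
  have hdiff : ∫⁻ x, (q0 x - ENNReal.ofReal (1 - ε) * p0 x) ∂μ = ENNReal.ofReal ε := by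
    rw [lintegral_sub (g := fun x => ENNReal.ofReal (1 - ε) * p0 x) (measurable_const.mul hm0) hsubfin
      (Filter.Eventually.of_forall key), hq0int, hsubint]
    rw [← ENNReal.ofReal_one, ← ENNReal.ofReal_sub _ (by linarith : (0:ℝ) ≤ 1 - ε)]
    norm_num
  have hhint : ∫⁻ x, h x ∂μ = 1 := by
    simp only [hhdef]
    rw [lintegral_const_mul _ (f := fun x => q0 x - ENNReal.ofReal (1 - ε) * p0 x)
        (hq0meas.sub (measurable_const.mul hm0)), hdiff,
      ENNReal.inv_mul_cancel heps0 hepst]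
  -- pointwise decomposition
  have hdecomp : ∀ x, q0 x = ENNReal.ofReal (1 - ε) * p0 x + ENNReal.ofReal ε * h x := by
    intro x
    simp only [hhdef]
    rw [← mul_assoc, ENNReal.mul_inv_cancel heps0 hepst, one_mul,
      add_tsub_cancel_of_le (key x)]
  refine ⟨h, hhm, hhint, Filter.Eventually.of_forall hdecomp, ?_⟩
  intro A hA
  have hP : (μ.withDensity p0) A = ∫⁻ x in A, p0 x ∂μ := withDensity_apply _ hA
  have hQ : (μ.withDensity q0) A = ∫⁻ x in A, q0 x ∂μ := withDensity_apply _ hA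
  set P := ∫⁻ x in A, p0 x ∂μ with hPdef
  set H := ∫⁻ x in A, h x ∂μ with hHdef
  have hPle : P ≤ 1 := by
    rw [← hp0]; exact setLIntegral_le_lintegral _ _
  have hHle : H ≤ 1 := by
    rw [← hhint]; exact setLIntegral_le_lintegral _ _
  have hQval : ∫⁻ x in A, q0 x ∂μ
      = ENNReal.ofReal (1 - ε) * P + ENNReal.ofReal ε * H := by
    calc ∫⁻ x in A, q0 x ∂μ
        = ∫⁻ x in A, (ENNReal.ofReal (1 - ε) * p0 x + ENNReal.ofReal ε * h x) ∂μ := by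
          exact lintegral_congr fun x => hdecomp x
      _ = ENNReal.ofReal (1 - ε) * P + ENNReal.ofReal ε * H := by
          rw [lintegral_add_left (f := fun x => ENNReal.ofReal (1 - ε) * p0 x)
              (measurable_const.mul hm0),
            lintegral_const_mul _ hm0, lintegral_const_mul _ hhm]
  have hPfin : P ≠ ∞ := ne_top_of_le_ne_top one_ne_top hPle
  have hHfin : H ≠ ∞ := ne_top_of_le_ne_top one_ne_top hHle
  have hPQ : ((μ.withDensity q0) A).toReal
      = (1 - ε) * P.toReal + ε * H.toReal := by
    rw [hQ, hQval, ENNReal.toReal_add (by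
        exact ENNReal.mul_ne_top ENNReal.ofReal_ne_top hPfin)
      (ENNReal.mul_ne_top ENNReal.ofReal_ne_top hHfin),
      ENNReal.toReal_mul, ENNReal.toReal_mul,
      ENNReal.toReal_ofReal (by linarith), ENNReal.toReal_ofReal (by linarith)]
  rw [hP, hPQ]
  have hPr0 : (0:ℝ) ≤ P.toReal := ENNReal.toReal_nonneg
  have hHr0 : (0:ℝ) ≤ H.toReal := ENNReal.toReal_nonneg
  have hPr1 : P.toReal ≤ 1 := by
    simpa using ENNReal.toReal_mono one_ne_top hPle
  have hHr1 : H.toReal ≤ 1 := by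
    simpa using ENNReal.toReal_mono one_ne_top hHle
  have : P.toReal - ((1 - ε) * P.toReal + ε * H.toReal) = ε * (P.toReal - H.toReal) := by
    ring
  rw [this, abs_mul, abs_of_pos hε0]
  have : |P.toReal - H.toReal| ≤ 1 := by
    rw [abs_le]; constructor <;> linarith
  nlinarith
end

section
/- Let π(x) = max{c', min{c'', p1(x)/p0(x)}} with 0 < c' < c'' < ∞, and define E_ε(x) = π(x) / (E_{P0}[π] + (c''−c')·ε). Then for any probability measure Q with D_TV(Q, P0) ≤ ε, one has E_Q[E_ε] ≤ 1; i.e. E_ε is an e-variable for the TV-ball null {Q : D_TV(P0,Q) ≤ ε}. -/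
open MeasureTheory ENNReal Set

/-- with `π = max{c', min{c'', p1/p0}}` and
`E_ε = π / (E_{P0}[π] + (c''−c')ε)`, for any `Q` with `D_TV(Q,P0) ≤ ε` we have
`E_Q[E_ε] ≤ 1`: `E_ε` is an e-variable for the TV-ball null around `P0`. -/
theorem stmt9 (μ : Measure ℝ) [SigmaFinite μ] (p0 p1 : ℝ → ℝ≥0∞)
    (hm0 : Measurable p0) (hm1 : Measurable p1)
    (hp0 : ∫⁻ x, p0 x ∂μ = 1) (hp1 : ∫⁻ x, p1 x ∂μ = 1)
    (c' c'' ε : ℝ) (hc' : 0 < c') (hc : c' < c'') (hε : 0 < ε)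
    (π Eε : ℝ → ℝ)
    (hπ : ∀ x, π x = ((p1 x / p0 x ⊓ ENNReal.ofReal c'') ⊔ ENNReal.ofReal c').toReal)
    (hEε : ∀ x, Eε x =
      π x / ((∫ y, π y ∂(μ.withDensity p0)) + (c'' - c') * ε)) :
    ∀ Q : Measure ℝ, IsProbabilityMeasure Q →
      (∀ A : Set ℝ, MeasurableSet A →
        |(Q A).toReal - ((μ.withDensity p0) A).toReal| ≤ ε) →
      ∫ x, Eε x ∂Q ≤ 1 := by
  intro Q hQ hTV
  set ν := μ.withDensity p0 with hν
  have hνprob : IsProbabilityMeasure ν := by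
    constructor
    rw [hν, withDensity_apply _ MeasurableSet.univ, setLIntegral_univ, hp0]
  -- measurability and bounds for π
  have hπm : Measurable π := by
    have h : π = fun x => ((p1 x / p0 x ⊓ ENNReal.ofReal c'') ⊔ ENNReal.ofReal c').toReal :=
      funext hπ
    rw [h]
    exact (((hm1.div hm0).min measurable_const).max measurable_const).ennreal_toReal
  have hbd : ∀ x, (p1 x / p0 x ⊓ ENNReal.ofReal c'') ⊔ ENNReal.ofReal c' ≤ ENNReal.ofReal c'' :=
    fun x => sup_le (min_le_right _ _) (ofReal_le_ofReal hc.le)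
  have hπ_le : ∀ x, π x ≤ c'' := by
    intro x; rw [hπ x]
    calc ((p1 x / p0 x ⊓ ENNReal.ofReal c'') ⊔ ENNReal.ofReal c').toReal
        ≤ (ENNReal.ofReal c'').toReal := ENNReal.toReal_mono ofReal_ne_top (hbd x)
      _ = c'' := toReal_ofReal (by linarith)
  have hπ_ge : ∀ x, c' ≤ π x := by
    intro x; rw [hπ x]
    have hne : (p1 x / p0 x ⊓ ENNReal.ofReal c'') ⊔ ENNReal.ofReal c' ≠ ⊤ :=
      ((hbd x).trans_lt ofReal_lt_top).ne
    calc c' = (ENNReal.ofReal c').toReal := (toReal_ofReal hc'.le).symm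
      _ ≤ _ := ENNReal.toReal_mono hne le_sup_right
  -- integrability of π wrt any probability measure
  have hπ_int : ∀ (P : Measure ℝ), IsProbabilityMeasure P → Integrable π P := by
    intro P hP
    refine Integrable.mono' (integrable_const c'') hπm.aestronglyMeasurable ?_
    exact ae_of_all _ fun x => by
      rw [Real.norm_eq_abs, abs_of_nonneg (le_trans hc'.le (hπ_ge x))]; exact hπ_le x
  -- the function f = π - c'
  set M := c'' - c' with hM
  have hM0 : 0 < M := by simp [hM]; linarith
  set f : ℝ → ℝ := fun x => π x - c' with hf
  have hfm : Measurable f := hπm.sub measurable_const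
  have hf_nn : ∀ x, 0 ≤ f x := fun x => by simp [hf]; exact hπ_ge x
  have hf_le : ∀ x, f x ≤ M := fun x => by simp [hf, hM]; exact hπ_le x
  -- key comparison of lintegrals via layer cake
  have layer : ∀ (P : Measure ℝ),
      ∫⁻ x, ENNReal.ofReal (f x) ∂P = ∫⁻ t in Ioi 0, P {a | t < f a} := by
    intro P
    exact lintegral_eq_lintegral_meas_lt P (ae_of_all _ hf_nn) hfm.aemeasurable
  have hTV' : ∀ A : Set ℝ, MeasurableSet A → Q A ≤ ν A + ENNReal.ofReal ε := by
    intro A hA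
    have h1 := hTV A hA
    have hQA : Q A ≠ ⊤ := (measure_lt_top Q A).ne
    have hνA : ν A ≠ ⊤ := (measure_lt_top ν A).ne
    have : (Q A).toReal ≤ (ν A).toReal + ε := by
      have := abs_le.mp h1; linarith [this.2]
    calc Q A = ENNReal.ofReal (Q A).toReal := (ofReal_toReal hQA).symm
      _ ≤ ENNReal.ofReal ((ν A).toReal + ε) := ofReal_le_ofReal this
      _ = ENNReal.ofReal (ν A).toReal + ENNReal.ofReal ε :=
          ofReal_add toReal_nonneg hε.le
      _ = ν A + ENNReal.ofReal ε := by rw [ofReal_toReal hνA]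
  have hsetm : ∀ t : ℝ, MeasurableSet {a : ℝ | t < f a} :=
    fun t => measurableSet_lt measurable_const hfm
  have keyL : ∫⁻ x, ENNReal.ofReal (f x) ∂Q ≤
      ∫⁻ x, ENNReal.ofReal (f x) ∂ν + ENNReal.ofReal (M * ε) := by
    rw [layer Q, layer ν]
    have hsplit : (Ioi (0:ℝ)) = Ioc 0 M ∪ Ioi M := (Ioc_union_Ioi_eq_Ioi hM0.le).symm
    have hzero : ∫⁻ t in Ioi M, Q {a | t < f a} = 0 := by
      rw [setLIntegral_congr_fun measurableSet_Ioi
        (fun t (ht : M < t) => by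
          have : {a : ℝ | t < f a} = ∅ := by
            ext a; simp only [mem_setOf_eq, mem_empty_iff_false, iff_false, not_lt]
            exact (hf_le a).trans ht.le
          rw [this, measure_empty])]
      simp
    have hQsplit : ∫⁻ t in Ioi 0, Q {a | t < f a} = ∫⁻ t in Ioc 0 M, Q {a | t < f a} := by
      rw [hsplit, lintegral_union measurableSet_Ioi Ioc_disjoint_Ioi_same, hzero, add_zero]
    rw [hQsplit]
    calc ∫⁻ t in Ioc 0 M, Q {a | t < f a}
        ≤ ∫⁻ t in Ioc 0 M, (ν {a | t < f a} + ENNReal.ofReal ε) :=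
          lintegral_mono fun t => hTV' _ (hsetm t)
      _ = (∫⁻ t in Ioc 0 M, ν {a | t < f a}) + ENNReal.ofReal ε * volume (Ioc 0 M) := by
          rw [lintegral_add_right _ measurable_const, setLIntegral_const]
      _ ≤ (∫⁻ t in Ioi 0, ν {a | t < f a}) + ENNReal.ofReal (M * ε) := by
          gcongr
          · exact Ioc_subset_Ioi_self
          · rw [Real.volume_Ioc, sub_zero, ← ofReal_mul hε.le, mul_comm]
  -- finiteness
  have hfin : ∀ (P : Measure ℝ), IsProbabilityMeasure P →
      ∫⁻ x, ENNReal.ofReal (f x) ∂P ≠ ⊤ := by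
    intro P hP
    refine ne_top_of_le_ne_top (b := ENNReal.ofReal M) ofReal_ne_top ?_
    calc ∫⁻ x, ENNReal.ofReal (f x) ∂P ≤ ∫⁻ _, ENNReal.ofReal M ∂P :=
          lintegral_mono fun x => ofReal_le_ofReal (hf_le x)
      _ = ENNReal.ofReal M := by simp
  -- convert to Bochner integrals
  have hint_eq : ∀ (P : Measure ℝ), IsProbabilityMeasure P →
      ∫ x, f x ∂P = (∫⁻ x, ENNReal.ofReal (f x) ∂P).toReal := by
    intro P hP
    rw [integral_eq_lintegral_of_nonneg_ae (ae_of_all _ hf_nn) hfm.aestronglyMeasurable]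
  have keyf : ∫ x, f x ∂Q ≤ ∫ x, f x ∂ν + M * ε := by
    rw [hint_eq Q hQ, hint_eq ν hνprob]
    have := ENNReal.toReal_mono (by
      exact ENNReal.add_ne_top.mpr ⟨hfin ν hνprob, ofReal_ne_top⟩) keyL
    rwa [ENNReal.toReal_add (hfin ν hνprob) ofReal_ne_top,
      toReal_ofReal (by positivity)] at this
  -- from f back to π
  have hf_int : ∀ (P : Measure ℝ), IsProbabilityMeasure P → Integrable f P :=
    fun P hP => (hπ_int P hP).sub (integrable_const c')
  have hπeq : ∀ (P : Measure ℝ), IsProbabilityMeasure P →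
      ∫ x, π x ∂P = ∫ x, f x ∂P + c' := by
    intro P hP
    have : ∫ x, f x ∂P = ∫ x, π x ∂P - ∫ x, (c' : ℝ) ∂P :=
      integral_sub (hπ_int P hP) (integrable_const c')
    rw [integral_const] at this
    simp only [probReal_univ, one_smul] at this
    linarith
  have key : ∫ x, π x ∂Q ≤ ∫ x, π x ∂ν + M * ε := by
    rw [hπeq Q hQ, hπeq ν hνprob]; linarith [keyf]
  -- positivity of the denominator
  have hπν_pos : 0 < ∫ x, π x ∂ν := by
    have : (c' : ℝ) = ∫ _, (c' : ℝ) ∂ν := by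
      rw [integral_const]; simp
    calc (0:ℝ) < c' := hc'
      _ = ∫ _, (c' : ℝ) ∂ν := this
      _ ≤ ∫ x, π x ∂ν := integral_mono (integrable_const c') (hπ_int ν hνprob)
            (fun x => hπ_ge x)
  have hD : 0 < (∫ y, π y ∂ν) + (c'' - c') * ε := by
    have : 0 < (c'' - c') * ε := by positivity
    linarith
  -- conclude
  have hEeq : ∫ x, Eε x ∂Q = (∫ x, π x ∂Q) / ((∫ y, π y ∂ν) + (c'' - c') * ε) := by
    have h : Eε = fun x => π x / ((∫ y, π y ∂ν) + (c'' - c') * ε) := funext hEε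
    rw [h, integral_div]
  rw [hEeq, div_le_one hD]
  simpa [hM] using key
end

section
/- Let X_1, X_2, ... be a sequence of random variables adapted to a filtration (F_n), such that the conditional distribution of X_n given F_{n-1} always lies within TV-distance ε of P0. Let E_ε be as above (a [c',c'']-valued truncated likelihood ratio normalized by E_{P0}[π] + (c''−c')ε) and define R_0 = 1, R_n = R_{n-1}·E_ε(X_n). Then (R_n) is a nonnegative supermartingale with R_0 = 1 with respect to (F_n). -/
open MeasureTheory ENNReal Set Filter

lemma tv_integral_bound (P Q : Measure ℝ) [IsProbabilityMeasure P] [IsProbabilityMeasure Q]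
    (f : ℝ → ℝ) (hfm : Measurable f) (c' c'' : ℝ) (hc' : 0 ≤ c') (hcc : c' ≤ c'')
    (hlb : ∀ x, c' ≤ f x) (hub : ∀ x, f x ≤ c'') (ε : ℝ) (hε : 0 ≤ ε)
    (hTV : ∀ A : Set ℝ, MeasurableSet A → |(Q A).toReal - (P A).toReal| ≤ ε) :
    ∫ x, f x ∂Q ≤ (∫ x, f x ∂P) + (c'' - c') * ε := by
  set b := c'' - c' with hbdef
  have hb : 0 ≤ b := sub_nonneg.2 hcc
  set g : ℝ → ℝ := fun x => f x - c' with hgdef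
  have hgm : Measurable g := hfm.sub measurable_const
  have hgnn : ∀ x, 0 ≤ g x := fun x => sub_nonneg.2 (hlb x)
  have hgub : ∀ x, g x ≤ b := fun x => sub_le_sub_right (hub x) _
  have hfint : ∀ (ν : Measure ℝ) [IsProbabilityMeasure ν], Integrable f ν := by
    intro ν _
    refine ⟨hfm.aestronglyMeasurable, ?_⟩
    apply HasFiniteIntegral.of_bounded (C := c'')
    filter_upwards with x
    rw [Real.norm_eq_abs, abs_of_nonneg (hc'.trans (hlb x))]; exact hub x
  have hgint : ∀ (ν : Measure ℝ) [IsProbabilityMeasure ν], Integrable g ν := by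
    intro ν _
    exact (hfint ν).sub (integrable_const c')
  have hgig : ∀ (ν : Measure ℝ) [IsProbabilityMeasure ν],
      ∫ x, g x ∂ν = (∫ x, f x ∂ν) - c' := by
    intro ν _
    rw [hgdef]
    rw [integral_sub (hfint ν) (integrable_const c'), integral_const]
    simp
  have hlcQ := (hgint Q).integral_eq_integral_meas_lt (Filter.Eventually.of_forall hgnn)
  have hlcP := (hgint P).integral_eq_integral_meas_lt (Filter.Eventually.of_forall hgnn)
  set FQ : ℝ → ℝ := fun t => (Q {a | t < g a}).toReal with hFQdef
  set FP : ℝ → ℝ := fun t => (P {a | t < g a}).toReal with hFPdef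
  have hFPm : Measurable FP := by
    have : Antitone FP := fun s t hst =>
      ENNReal.toReal_mono (measure_ne_top _ _)
        (measure_mono (fun a ha => lt_of_le_of_lt hst ha))
    exact this.measurable
  have hle1 : ∀ (ν : Measure ℝ) [IsProbabilityMeasure ν] (t : ℝ),
      (ν {a : ℝ | t < g a}).toReal ≤ 1 := by
    intro ν _ t
    have := ENNReal.toReal_mono (measure_ne_top ν univ) (measure_mono (subset_univ {a : ℝ | t < g a}))
    simpa using this
  have hempty : ∀ t, b < t → {a : ℝ | t < g a} = (∅ : Set ℝ) := by
    intro t ht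
    ext a; simp only [mem_setOf_eq, mem_empty_iff_false, iff_false, not_lt]
    exact (hgub a).trans ht.le
  set ind : ℝ → ℝ := (Ioc (0:ℝ) b).indicator (fun _ => 1) with hinddef
  have hindint : Integrable ind (volume.restrict (Ioi 0)) := by
    apply Integrable.restrict (s := Ioi (0:ℝ))
    rw [integrable_indicator_iff measurableSet_Ioc]
    exact integrableOn_const measure_Ioc_lt_top.ne
  have hFPint : Integrable FP (volume.restrict (Ioi 0)) := by
    refine Integrable.mono' hindint hFPm.aestronglyMeasurable ?_
    rw [ae_restrict_iff' measurableSet_Ioi]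
    filter_upwards with t ht
    rw [Real.norm_eq_abs, abs_of_nonneg ENNReal.toReal_nonneg]
    by_cases htb : t ≤ b
    · have hmem : t ∈ Ioc (0:ℝ) b := ⟨ht, htb⟩
      rw [hinddef, indicator_of_mem hmem]
      exact hle1 P t
    · push_neg at htb
      show (P {a | t < g a}).toReal ≤ ind t
      rw [hempty t htb]
      simp only [measure_empty, ENNReal.toReal_zero]
      exact indicator_nonneg (fun _ _ => zero_le_one) t
  have hRHSint : Integrable (fun t => FP t + ε * ind t) (volume.restrict (Ioi 0)) :=
    hFPint.add (hindint.const_mul ε)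
  have hptwise : ∀ t ∈ Ioi (0:ℝ), FQ t ≤ FP t + ε * ind t := by
    intro t ht
    by_cases htb : t ≤ b
    · have hmem : t ∈ Ioc (0:ℝ) b := ⟨ht, htb⟩
      rw [hinddef, indicator_of_mem hmem, mul_one]
      have hA : MeasurableSet {a : ℝ | t < g a} := measurableSet_lt measurable_const hgm
      have := hTV _ hA
      have habs := abs_le.1 this
      linarith [habs.1, habs.2]
    · push_neg at htb
      rw [hinddef, indicator_of_notMem (fun hmem => absurd hmem.2 (not_le.2 htb)), mul_zero, add_zero]
      show (Q {a | t < g a}).toReal ≤ _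
      rw [hempty t htb]
      simp only [measure_empty, ENNReal.toReal_zero]
      exact ENNReal.toReal_nonneg
  have hmono : ∫ t in Ioi (0:ℝ), FQ t ≤ ∫ t in Ioi (0:ℝ), (FP t + ε * ind t) := by
    apply integral_mono_of_nonneg
    · filter_upwards with t; exact ENNReal.toReal_nonneg
    · exact hRHSint
    · exact (ae_restrict_iff' measurableSet_Ioi).2 (Filter.Eventually.of_forall hptwise)
  have hindval : ∫ t in Ioi (0:ℝ), ind t = b := by
    rw [hinddef, integral_indicator measurableSet_Ioc, Measure.restrict_restrict measurableSet_Ioc]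
    have : Ioc (0:ℝ) b ∩ Ioi 0 = Ioc 0 b := inter_eq_left.2 (fun t ht => ht.1)
    rw [this, setIntegral_const, Real.volume_real_Ioc_of_le hb, smul_eq_mul, mul_one,
      sub_zero]
  have hRHSval : ∫ t in Ioi (0:ℝ), (FP t + ε * ind t) = (∫ t in Ioi (0:ℝ), FP t) + ε * b := by
    rw [integral_add hFPint (hindint.const_mul ε), integral_const_mul, hindval]
  have h1 : ∫ x, g x ∂Q ≤ (∫ x, g x ∂P) + ε * b := by
    rw [hlcQ, hlcP]
    calc ∫ t in Ioi (0:ℝ), FQ t ≤ ∫ t in Ioi (0:ℝ), (FP t + ε * ind t) := hmono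
      _ = (∫ t in Ioi (0:ℝ), FP t) + ε * b := hRHSval
  rw [hgig Q, hgig P] at h1
  linarith

/-- under the sequentially adaptive contamination model — the conditional
law `Q n` of `X n` given `F n` lies within TV-distance `ε` of `P0` — the process
`R n = ∏_{i<n} E_ε(X i)` (with `E_ε` the normalized truncated likelihood ratio) is a
nonnegative supermartingale with `R 0 = 1`. -/
theorem stmt10 {Ω : Type*} {mΩ : MeasurableSpace Ω} (ℙ : Measure Ω) [IsProbabilityMeasure ℙ]
    (F : Filtration ℕ mΩ) (X : ℕ → Ω → ℝ)
    (hX : ∀ n, StronglyMeasurable[F (n + 1)] (X n))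
    (μ : Measure ℝ) [SigmaFinite μ] (p0 p1 : ℝ → ℝ≥0∞)
    (hm0 : Measurable p0) (hm1 : Measurable p1)
    (hp0 : ∫⁻ x, p0 x ∂μ = 1) (hp1 : ∫⁻ x, p1 x ∂μ = 1)
    (c' c'' ε : ℝ) (hc' : 0 < c') (hc : c' < c'') (hε : 0 < ε)
    (π Eε : ℝ → ℝ)
    (hπ : ∀ x, π x = ((p1 x / p0 x ⊓ ENNReal.ofReal c'') ⊔ ENNReal.ofReal c').toReal)
    (hEε : ∀ x, Eε x = π x / ((∫ y, π y ∂(μ.withDensity p0)) + (c'' - c') * ε))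
    -- `Q n ω` is the conditional distribution of `X n` given `F n`:
    (Q : ℕ → Ω → Measure ℝ)
    (hQprob : ∀ n ω, IsProbabilityMeasure (Q n ω))
    (hcond : ∀ (n : ℕ) (g : ℝ → ℝ), Measurable g → (∃ C, ∀ x, |g x| ≤ C) →
      (ℙ[fun ω => g (X n ω)|F n]) =ᵐ[ℙ] fun ω => ∫ x, g x ∂(Q n ω))
    -- the adaptive contamination assumption: `D_TV(Q n ω, P0) ≤ ε`:
    (hTV : ∀ n ω, ∀ A : Set ℝ, MeasurableSet A →
      |((Q n ω) A).toReal - ((μ.withDensity p0) A).toReal| ≤ ε)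
    (R : ℕ → Ω → ℝ)
    (hR : ∀ n ω, R n ω = ∏ i ∈ Finset.range n, Eε (X i ω)) :
    Supermartingale R F ℙ ∧ (∀ ω, R 0 ω = 1) ∧ (∀ n ω, 0 ≤ R n ω) := by
  have hP0prob : IsProbabilityMeasure (μ.withDensity p0) := by
    constructor
    rw [withDensity_apply _ MeasurableSet.univ, setLIntegral_univ, hp0]
  -- measurability of π
  have hπm : Measurable π := by
    have : π = fun x => ((p1 x / p0 x ⊓ ENNReal.ofReal c'') ⊔ ENNReal.ofReal c').toReal :=
      funext hπ
    rw [this]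
    exact (((hm1.div hm0).min measurable_const).max measurable_const).ennreal_toReal
  -- bounds on π
  have hπub : ∀ x, π x ≤ c'' := by
    intro x; rw [hπ x]
    exact ENNReal.toReal_le_of_le_ofReal (hc'.le.trans hc.le)
      (sup_le (min_le_right _ _) (ENNReal.ofReal_le_ofReal hc.le))
  have hπlb : ∀ x, c' ≤ π x := by
    intro x; rw [hπ x]
    have hne : ((p1 x / p0 x ⊓ ENNReal.ofReal c'') ⊔ ENNReal.ofReal c') ≠ ⊤ :=
      ne_top_of_le_ne_top ENNReal.ofReal_ne_top
        (sup_le (min_le_right _ _) (ENNReal.ofReal_le_ofReal hc.le))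
    calc c' = (ENNReal.ofReal c').toReal := (ENNReal.toReal_ofReal hc'.le).symm
      _ ≤ _ := ENNReal.toReal_mono hne le_sup_right
  have hπint : ∀ (ν : Measure ℝ) [IsProbabilityMeasure ν], Integrable π ν := by
    intro ν _
    refine ⟨hπm.aestronglyMeasurable, ?_⟩
    apply HasFiniteIntegral.of_bounded (C := c'')
    filter_upwards with x
    rw [Real.norm_eq_abs, abs_of_nonneg (hc'.le.trans (hπlb x))]; exact hπub x
  set Z := ∫ y, π y ∂(μ.withDensity p0) with hZdef
  have hZ : c' ≤ Z := by
    have : ∫ (_ : ℝ), c' ∂(μ.withDensity p0) ≤ Z :=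
      integral_mono (integrable_const c') (hπint _) hπlb
    simpa using this
  set D := Z + (c'' - c') * ε with hDdef
  have hD : 0 < D := by
    have : 0 ≤ (c'' - c') * ε := mul_nonneg (by linarith) hε.le
    linarith
  have hEεeq : Eε = fun x => π x / D := funext hEε
  have hEm : Measurable Eε := by rw [hEεeq]; exact hπm.div_const D
  have hEnn : ∀ x, 0 ≤ Eε x := fun x => by
    rw [hEε x]; exact div_nonneg (hc'.le.trans (hπlb x)) hD.le
  have hEub : ∀ x, Eε x ≤ c'' / D := fun x => by
    rw [hEε x]; exact div_le_div_of_nonneg_right (hπub x) hD.le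
  set K := c'' / D with hKdef
  have hK : 0 ≤ K := div_nonneg (by linarith) hD.le
  -- key inequality: ∫ Eε dQ ≤ 1
  have hkey : ∀ n ω, ∫ x, Eε x ∂(Q n ω) ≤ 1 := by
    intro n ω
    haveI := hQprob n ω
    have h1 : ∫ x, π x ∂(Q n ω) ≤ Z + (c'' - c') * ε :=
      tv_integral_bound (μ.withDensity p0) (Q n ω) π hπm c' c'' hc'.le hc.le hπlb hπub ε hε.le
        (hTV n ω)
    have h2 : ∫ x, Eε x ∂(Q n ω) = (∫ x, π x ∂(Q n ω)) / D := by
      rw [hEεeq, integral_div]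
    rw [h2, div_le_one hD]
    exact h1
  -- nonnegativity and bounds for R
  have hRnn : ∀ n ω, 0 ≤ R n ω := by
    intro n ω
    rw [hR]
    exact Finset.prod_nonneg fun i _ => hEnn _
  have hRub : ∀ n ω, R n ω ≤ K ^ n := by
    intro n ω
    rw [hR]
    calc ∏ i ∈ Finset.range n, Eε (X i ω) ≤ ∏ _i ∈ Finset.range n, K :=
          Finset.prod_le_prod (fun i _ => hEnn _) (fun i _ => hEub _)
      _ = K ^ n := by simp
  -- adaptedness
  have hRsm : ∀ n, StronglyMeasurable[F n] (R n) := by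
    intro n
    have : R n = fun ω => ∏ i ∈ Finset.range n, Eε (X i ω) := funext (hR n)
    rw [this]
    apply Finset.stronglyMeasurable_fun_prod
    intro i hi
    have hi' : i + 1 ≤ n := Finset.mem_range.1 hi
    exact ((hEm.comp (hX i).measurable).stronglyMeasurable).mono (F.mono hi')
  -- integrability
  have hRint : ∀ n, Integrable (R n) ℙ := by
    intro n
    refine ⟨((hRsm n).mono (F.le n)).aestronglyMeasurable, ?_⟩
    apply HasFiniteIntegral.of_bounded (C := K ^ n)
    filter_upwards with ω
    rw [Real.norm_eq_abs, abs_of_nonneg (hRnn n ω)]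
    exact hRub n ω
  have hg_int : ∀ n, Integrable (fun ω => Eε (X n ω)) ℙ := by
    intro n
    refine ⟨((hEm.comp (hX n).measurable).stronglyMeasurable.mono (F.le (n+1))).aestronglyMeasurable, ?_⟩
    apply HasFiniteIntegral.of_bounded (C := K)
    filter_upwards with ω
    rw [Real.norm_eq_abs, abs_of_nonneg (hEnn _)]
    exact hEub _
  -- the supermartingale step
  have hstep : ∀ n, ℙ[R (n+1)|F n] ≤ᵐ[ℙ] R n := by
    intro n
    have hRsucc : R (n+1) = R n * fun ω => Eε (X n ω) := by
      funext ω
      rw [Pi.mul_apply, hR, hR, Finset.prod_range_succ]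
    have h1 : ℙ[R (n+1)|F n] =ᵐ[ℙ] R n * ℙ[fun ω => Eε (X n ω)|F n] := by
      rw [hRsucc]
      exact condExp_mul_of_stronglyMeasurable_left (hRsm n) (hRsucc ▸ hRint (n+1)) (hg_int n)
    have h2 : ℙ[fun ω => Eε (X n ω)|F n] =ᵐ[ℙ] fun ω => ∫ x, Eε x ∂(Q n ω) :=
      hcond n Eε hEm ⟨K, fun x => by rw [abs_of_nonneg (hEnn x)]; exact hEub x⟩
    filter_upwards [h1, h2] with ω hω1 hω2
    rw [hω1, Pi.mul_apply, hω2]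
    calc R n ω * ∫ x, Eε x ∂(Q n ω) ≤ R n ω * 1 :=
          mul_le_mul_of_nonneg_left (hkey n ω) (hRnn n ω)
      _ = R n ω := mul_one _
  exact ⟨supermartingale_nat hRsm hRint hstep, fun ω => by simp [hR], hRnn⟩
end

section
/- Under the setting above, with Q such that D_TV(Q, Q_{1,ε}) ≤ 2ε and D_TV(Q_{0,ε}, P0) ≤ ε (where Q_{j,ε} have densities q_{j,ε} and π = q_{1,ε}/q_{0,ε} takes values in [c', c'']), the growth rate satisfies r_Q^ε ≥ D_KL(Q_{1,ε}, Q_{0,ε}) − 2(log c'' − log c')·ε − log(1 + 2(c''−c')·ε). -/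
open MeasureTheory ENNReal Set

lemma integrable_of_bdd {μ : Measure ℝ} [IsFiniteMeasure μ] {f : ℝ → ℝ} {a b : ℝ}
    (hf : Measurable f) (hfa : ∀ x, a ≤ f x) (hfb : ∀ x, f x ≤ b) :
    Integrable f μ := by
  refine ⟨hf.aestronglyMeasurable, HasFiniteIntegral.of_bounded (C := |a| + |b|) ?_⟩
  refine ae_of_all _ fun x => abs_le.mpr ⟨?_, ?_⟩
  · calc -(|a| + |b|) ≤ -|a| := by nlinarith [abs_nonneg b]
      _ ≤ a := neg_abs_le a
      _ ≤ f x := hfa x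
  · calc f x ≤ b := hfb x
      _ ≤ |b| := le_abs_self b
      _ ≤ |a| + |b| := by nlinarith [abs_nonneg a]

lemma tv_integral_bound_s14 (μ ν : Measure ℝ) [IsProbabilityMeasure μ] [IsProbabilityMeasure ν]
    (f : ℝ → ℝ) (hf : Measurable f) (a b δ : ℝ) (hab : a ≤ b) (hδ : 0 ≤ δ)
    (hfa : ∀ x, a ≤ f x) (hfb : ∀ x, f x ≤ b)
    (hTV : ∀ A : Set ℝ, MeasurableSet A → |(μ A).toReal - (ν A).toReal| ≤ δ) :
    |(∫ x, f x ∂μ) - ∫ x, f x ∂ν| ≤ (b - a) * δ := by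
  set g : ℝ → ℝ := fun x => f x - a with hg
  have hgm : Measurable g := hf.sub measurable_const
  have hg0 : ∀ x, 0 ≤ g x := fun x => sub_nonneg.mpr (hfa x)
  have hgM : ∀ x, g x ≤ b - a := fun x => sub_le_sub_right (hfb x) a
  have hgintμ : Integrable g μ := integrable_of_bdd hgm hg0 hgM
  have hgintν : Integrable g ν := integrable_of_bdd hgm hg0 hgM
  have hμeq : ∫ x, g x ∂μ = ∫ t in Ioc 0 (b - a), (μ {x | t ≤ g x}).toReal :=
    hgintμ.integral_eq_integral_Ioc_meas_le (ae_of_all _ hg0) (ae_of_all _ hgM)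
  have hνeq : ∫ x, g x ∂ν = ∫ t in Ioc 0 (b - a), (ν {x | t ≤ g x}).toReal :=
    hgintν.integral_eq_integral_Ioc_meas_le (ae_of_all _ hg0) (ae_of_all _ hgM)
  have hdiff : (∫ x, f x ∂μ) - ∫ x, f x ∂ν = (∫ x, g x ∂μ) - ∫ x, g x ∂ν := by
    rw [hg]
    rw [integral_sub (integrable_of_bdd hf hfa hfb) (integrable_const a),
        integral_sub (integrable_of_bdd hf hfa hfb) (integrable_const a)]
    simp
  -- integrability of the layer functions
  have meas_layer : ∀ (κ : Measure ℝ), Measurable (fun t => (κ {x | t ≤ g x}).toReal) := by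
    intro κ
    refine Measurable.ennreal_toReal (Antitone.measurable ?_)
    intro s t hst
    exact measure_mono (fun x hx => le_trans hst hx)
  have int_layer : ∀ (κ : Measure ℝ) [IsProbabilityMeasure κ],
      IntegrableOn (fun t => (κ {x | t ≤ g x}).toReal) (Ioc 0 (b - a)) := by
    intro κ _
    refine ⟨(meas_layer κ).aestronglyMeasurable, ?_⟩
    refine HasFiniteIntegral.of_bounded (C := 1) (ae_of_all _ fun t => ?_)
    simp only [Real.norm_eq_abs, abs_of_nonneg ENNReal.toReal_nonneg]
    exact ENNReal.toReal_le_of_le_ofReal zero_le_one (by simpa using prob_le_one)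
  rw [hdiff, hμeq, hνeq, ← integral_sub (int_layer μ) (int_layer ν)]
  have hint : IntegrableOn (fun t => |(μ {x | t ≤ g x}).toReal - (ν {x | t ≤ g x}).toReal|)
      (Ioc 0 (b - a)) := ((int_layer μ).sub (int_layer ν)).abs
  calc |∫ t in Ioc 0 (b - a), ((μ {x | t ≤ g x}).toReal - (ν {x | t ≤ g x}).toReal)|
      ≤ ∫ t in Ioc 0 (b - a), |(μ {x | t ≤ g x}).toReal - (ν {x | t ≤ g x}).toReal| :=
        (Real.norm_eq_abs _ ▸ norm_integral_le_integral_norm _).trans_eq (by simp [Real.norm_eq_abs])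
    _ ≤ ∫ _t in Ioc 0 (b - a), δ := by
        refine setIntegral_mono_on hint (integrableOn_const measure_Ioc_lt_top.ne)
          measurableSet_Ioc (fun t _ => ?_)
        exact hTV _ (measurableSet_le measurable_const hgm)
    _ = (volume (Ioc 0 (b - a))).toReal * δ := by rw [setIntegral_const, smul_eq_mul]; rfl
    _ ≤ (b - a) * δ := by
        rw [Real.volume_Ioc, ENNReal.toReal_ofReal (by linarith)]
        nlinarith

/-- with `π = q_{1,ε}/q_{0,ε}` taking values in `[c',c'']`,
`D_TV(Q, Q_{1,ε}) ≤ 2ε` and `D_TV(Q_{0,ε}, P0) ≤ ε`, the growth rate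
`r_Q^ε = E_Q[log π] − log(E_{P0}π + (c''−c')ε)` satisfies
`r_Q^ε ≥ D_KL(Q_{1,ε},Q_{0,ε}) − 2(log c''−log c')ε − log(1+2(c''−c')ε)`,
where `D_KL(Q_{1,ε},Q_{0,ε}) = E_{Q_{1,ε}}[log π]` since `π` is the density ratio. -/
theorem stmt14 (μ : Measure ℝ) [SigmaFinite μ]
    (q0 q1 : ℝ → ℝ≥0∞) (hm0 : Measurable q0) (hm1 : Measurable q1)
    (hq0 : ∫⁻ x, q0 x ∂μ = 1) (hq1 : ∫⁻ x, q1 x ∂μ = 1)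
    (P0 Q : Measure ℝ) [IsProbabilityMeasure P0] [IsProbabilityMeasure Q]
    (c' c'' ε : ℝ) (hc' : 0 < c') (hc : c' < c'') (hε : 0 < ε)
    (π : ℝ → ℝ) (hπmeas : Measurable π)
    (hπlb : ∀ x, c' ≤ π x) (hπub : ∀ x, π x ≤ c'')
    -- `π` is the likelihood ratio `q_{1,ε}/q_{0,ε}`:
    (hπratio : ∀ᵐ x ∂μ, ENNReal.ofReal (π x) = q1 x / q0 x)
    -- `D_TV(Q, Q_{1,ε}) ≤ 2ε`:
    (hTV1 : ∀ A : Set ℝ, MeasurableSet A →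
      |(Q A).toReal - ((μ.withDensity q1) A).toReal| ≤ 2 * ε)
    -- `D_TV(Q_{0,ε}, P0) ≤ ε`:
    (hTV0 : ∀ A : Set ℝ, MeasurableSet A →
      |((μ.withDensity q0) A).toReal - (P0 A).toReal| ≤ ε) :
    (∫ x, Real.log (π x) ∂Q) - Real.log ((∫ x, π x ∂P0) + (c'' - c') * ε)
      ≥ (∫ x, Real.log (π x) ∂(μ.withDensity q1))
        - 2 * (Real.log c'' - Real.log c') * ε
        - Real.log (1 + 2 * (c'' - c') * ε) := by
  haveI hP1 : IsProbabilityMeasure (μ.withDensity q1) :=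
    ⟨by rw [withDensity_apply _ MeasurableSet.univ, setLIntegral_univ, hq1]⟩
  haveI hP0' : IsProbabilityMeasure (μ.withDensity q0) :=
    ⟨by rw [withDensity_apply _ MeasurableSet.univ, setLIntegral_univ, hq0]⟩
  have hcc : 0 < c'' - c' := sub_pos.mpr hc
  -- E_{Q0} π = 1
  have hq0fin : ∀ᵐ x ∂μ, q0 x < ∞ := ae_lt_top hm0 (by simp [hq0])
  have hmul : ∀ᵐ x ∂μ, ENNReal.ofReal (π x) * q0 x = q1 x := by
    filter_upwards [hπratio, hq0fin] with x hr hfin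
    have h0 : q0 x ≠ 0 := by
      intro h0
      rw [h0] at hr
      rcases eq_or_ne (q1 x) 0 with h1 | h1
      · rw [h1] at hr
        simp only [ENNReal.zero_div, ENNReal.ofReal_eq_zero] at hr
        nlinarith [hπlb x]
      · rw [ENNReal.div_zero h1] at hr
        exact ENNReal.ofReal_ne_top hr
    rw [hr, ENNReal.div_mul_cancel h0 hfin.ne]
  have hπnn : ∀ x, (0:ℝ) ≤ π x := fun x => le_trans hc'.le (hπlb x)
  have hlintQ0 : ∫⁻ x, ENNReal.ofReal (π x) ∂(μ.withDensity q0) = 1 := by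
    rw [lintegral_withDensity_eq_lintegral_mul _ hm0 hπmeas.ennreal_ofReal]
    rw [← hq1]
    refine lintegral_congr_ae ?_
    filter_upwards [hmul] with x hx
    simpa [mul_comm] using hx
  have hQ0π : ∫ x, π x ∂(μ.withDensity q0) = 1 := by
    rw [integral_eq_lintegral_of_nonneg_ae (ae_of_all _ hπnn) hπmeas.aestronglyMeasurable,
      hlintQ0]
    simp
  -- TV bound for π between Q0 and P0
  have hπTV : |(∫ x, π x ∂(μ.withDensity q0)) - ∫ x, π x ∂P0| ≤ (c'' - c') * ε :=
    tv_integral_bound_s14 _ _ π hπmeas c' c'' ε hc.le hε.le hπlb hπub hTV0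
  have hP0π_le : ∫ x, π x ∂P0 ≤ 1 + (c'' - c') * ε := by
    have := abs_le.mp hπTV
    linarith [this.1, hQ0π.symm ▸ this.1]
  have hP0π_nn : 0 ≤ ∫ x, π x ∂P0 := integral_nonneg hπnn
  -- log bound
  have hlog : Real.log ((∫ x, π x ∂P0) + (c'' - c') * ε) ≤ Real.log (1 + 2 * (c'' - c') * ε) := by
    apply Real.log_le_log (by positivity)
    nlinarith
  -- TV bound for log π between Q and Q1
  have hloglb : ∀ x, Real.log c' ≤ Real.log (π x) := fun x =>
    Real.log_le_log hc' (hπlb x)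
  have hlogub : ∀ x, Real.log (π x) ≤ Real.log c'' := fun x =>
    Real.log_le_log (lt_of_lt_of_le hc' (hπlb x)) (hπub x)
  have hlogTV : |(∫ x, Real.log (π x) ∂Q) - ∫ x, Real.log (π x) ∂(μ.withDensity q1)|
      ≤ (Real.log c'' - Real.log c') * (2 * ε) :=
    tv_integral_bound_s14 _ _ (fun x => Real.log (π x)) (Real.measurable_log.comp hπmeas)
      (Real.log c') (Real.log c'') (2 * ε)
      (Real.log_le_log hc' hc.le) (by linarith) hloglb hlogub hTV1
  have := abs_le.mp hlogTV
  nlinarith [this.1, this.2]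
end

section
/- Consider a one-parameter exponential family p_θ(x) = h(x)exp(θT(x) − A(θ)) with A convex and differentiable. Let Θ0 = [a,b] and θ1 ∉ [a,b], and let θ* be the closest point of [a,b] to θ1. Then for every θ ∈ [a,b], E_{θ1}[p_θ(X)/p_{θ*}(X)] ≤ 1; equivalently A(θ − θ* + θ1) − A(θ1) ≤ A(θ) − A(θ*). Hence p_{θ*} is the reverse information projection of p_{θ1} onto {p_θ : θ ∈ [a,b]}. -/
open MeasureTheory Set

lemma convex_four (A : ℝ → ℝ) (hA : ConvexOn ℝ Set.univ A) {x u v y : ℝ}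
    (hxu : x ≤ u) (huy : u ≤ y) (hsum : u + v = x + y) :
    A u + A v ≤ A x + A y := by
  rcases eq_or_lt_of_le (hxu.trans huy) with hxy | hxy
  · have hux : u = x := le_antisymm (by linarith) hxu
    have hvy : v = y := by linarith
    rw [hux, hvy]
  · set t : ℝ := (y - u) / (y - x) with ht
    have hyx : (0:ℝ) < y - x := by linarith
    have ht0 : 0 ≤ t := div_nonneg (by linarith) hyx.le
    have ht1 : t ≤ 1 := (div_le_one hyx).mpr (by linarith)
    have hveq : v = x + y - u := by linarith
    have hu : t * x + (1 - t) * y = u := by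
      have htm : t * (y - x) = y - u := by rw [ht]; exact div_mul_cancel₀ _ hyx.ne'
      linear_combination -htm
    have hv : (1 - t) * x + t * y = v := by
      rw [hveq]
      have htm : t * (y - x) = y - u := by rw [ht]; exact div_mul_cancel₀ _ hyx.ne'
      linear_combination htm
    have h1 := hA.2 (mem_univ x) (mem_univ y) ht0 (by linarith : (0:ℝ) ≤ 1 - t) (by ring)
    have h2 := hA.2 (mem_univ x) (mem_univ y) (by linarith : (0:ℝ) ≤ 1 - t) ht0 (by ring)
    simp only [smul_eq_mul] at h1 h2
    rw [hu] at h1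
    rw [hv] at h2
    linarith

/-- in a one-parameter exponential family
`p_θ(x) = h(x)·exp(θT(x) − A(θ))` with `A` convex and differentiable, if `θ* ∈ [a,b]` is
the point of `[a,b]` closest to `θ1 ∉ [a,b]`, then for every `θ ∈ [a,b]`,
`E_{θ1}[p_θ/p_{θ*}] ≤ 1`, equivalently `A(θ − θ* + θ1) − A(θ1) ≤ A(θ) − A(θ*)`;
hence `p_{θ*}` is the reverse information projection of `p_{θ1}` onto the family over
`[a,b]`. -/
theorem stmt16 (μ : Measure ℝ) [SigmaFinite μ]
    (h T : ℝ → ℝ) (hh : ∀ x, 0 ≤ h x) (hhm : Measurable h) (hTm : Measurable T)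
    (A : ℝ → ℝ) (hA : ConvexOn ℝ Set.univ A) (hA' : Differentiable ℝ A)
    (p : ℝ → ℝ → ℝ)
    (hp : ∀ θ x, p θ x = h x * Real.exp (θ * T x - A θ))
    (hnorm : ∀ θ, ∫ x, p θ x ∂μ = 1)
    (a b θ1 θs : ℝ) (hab : a ≤ b) (hθ1 : θ1 ∉ Icc a b)
    (hθs : θs ∈ Icc a b) (hclosest : ∀ θ ∈ Icc a b, |θ1 - θs| ≤ |θ1 - θ|) :
    ∀ θ ∈ Icc a b,
      (∫ x, (p θ x / p θs x) * p θ1 x ∂μ) ≤ 1 ∧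
      A (θ - θs + θ1) - A θ1 ≤ A θ - A θs := by
  intro θ hθ
  have hθ1' : θ1 < a ∨ b < θ1 := by
    rcases lt_or_ge θ1 a with h1 | h1
    · exact Or.inl h1
    rcases le_or_gt θ1 b with h2 | h2
    · exact absurd ⟨h1, h2⟩ hθ1
    · exact Or.inr h2
  -- the convexity inequality
  have hineq : A (θ - θs + θ1) - A θ1 ≤ A θ - A θs := by
    rcases hθ1' with h1 | h1
    · -- θ1 < a, so θs = a
      have hsa : θs = a := by
        have := hclosest a ⟨le_refl a, hab⟩
        rw [abs_of_nonpos (by linarith [hθs.1] : θ1 - θs ≤ 0),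
            abs_of_nonpos (by linarith : θ1 - a ≤ 0)] at this
        linarith [hθs.1]
      have := convex_four A hA (x := θ1) (u := θs) (v := θ - θs + θ1) (y := θ)
        (by linarith [hθs.1]) (by rw [hsa]; exact hθ.1) (by ring)
      linarith
    · -- b < θ1, so θs = b
      have hsb : θs = b := by
        have := hclosest b ⟨hab, le_refl b⟩
        rw [abs_of_nonneg (by linarith [hθs.2] : 0 ≤ θ1 - θs),
            abs_of_nonneg (by linarith : 0 ≤ θ1 - b)] at this
        linarith [hθs.2]
      have := convex_four A hA (x := θ) (u := θs) (v := θ - θs + θ1) (y := θ1)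
        (by rw [hsb]; exact hθ.2) (by linarith [hθs.2]) (by ring)
      linarith
  refine ⟨?_, hineq⟩
  set Δ : ℝ := A (θ - θs + θ1) - A θ + A θs - A θ1 with hΔ
  have key : ∀ x, (p θ x / p θs x) * p θ1 x = Real.exp Δ * p (θ - θs + θ1) x := by
    intro x
    rcases eq_or_lt_of_le (hh x) with hx | hx
    · simp [hp, ← hx]
    · simp only [hp]
      rw [mul_div_mul_left _ _ (ne_of_gt hx)]
      have e1 : Real.exp (θ * T x - A θ) / Real.exp (θs * T x - A θs)
          = Real.exp ((θ - θs) * T x - A θ + A θs) := by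
        rw [← Real.exp_sub]; congr 1; ring
      rw [e1, mul_left_comm, ← Real.exp_add, mul_left_comm, ← Real.exp_add]
      congr 1
      rw [hΔ]; ring
  calc (∫ x, (p θ x / p θs x) * p θ1 x ∂μ)
      = ∫ x, Real.exp Δ * p (θ - θs + θ1) x ∂μ := by
        simp only [key]
    _ = Real.exp Δ * ∫ x, p (θ - θs + θ1) x ∂μ := integral_const_mul _ _
    _ = Real.exp Δ := by rw [hnorm]; ring
    _ ≤ 1 := Real.exp_le_one_iff.mpr (by rw [hΔ]; linarith)
end

section
/- Let A_n = {x : p̂_n(x)/p0(x) > c} and A = {x : p1(x)/p0(x) > c}, where p̂_n → p1 pointwise μ-a.e. and P1 assigns zero probability to the boundary {p1/p0 = c}. If P̂_n is the probability measure with density p̂_n, then P̂_n(A_n) → P1(A) as n → ∞. -/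
open MeasureTheory ENNReal Set Filter

/-- let `A_n = {p̂_n/p0 > c}` and `A = {p1/p0 > c}`, where the densities
`p̂_n → p1` pointwise μ-a.e. and `P1` assigns zero mass to the boundary `{p1/p0 = c}`.
Then `P̂_n(A_n) → P1(A)` as `n → ∞`. -/
theorem stmt19 (μ : Measure ℝ) [SigmaFinite μ]
    (p0 p1 : ℝ → ℝ≥0∞) (pn : ℕ → ℝ → ℝ≥0∞)
    (hm0 : Measurable p0) (hm1 : Measurable p1) (hmn : ∀ n, Measurable (pn n))
    (hp0 : ∫⁻ x, p0 x ∂μ = 1) (hp1 : ∫⁻ x, p1 x ∂μ = 1)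
    (hpn : ∀ n, ∫⁻ x, pn n x ∂μ = 1)
    (hconv : ∀ᵐ x ∂μ, Tendsto (fun n => pn n x) atTop (nhds (p1 x)))
    (c : ℝ) (hc : 0 < c)
    (hboundary : (μ.withDensity p1) {x | p1 x / p0 x = ENNReal.ofReal c} = 0) :
    Tendsto
      (fun n => ((μ.withDensity (pn n)) {x | ENNReal.ofReal c < pn n x / p0 x}).toReal)
      atTop
      (nhds (((μ.withDensity p1) {x | ENNReal.ofReal c < p1 x / p0 x}).toReal)) := by
  set A : Set ℝ := {x | ENNReal.ofReal c < p1 x / p0 x} with hAdef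
  set B : ℕ → Set ℝ := fun n => {x | ENNReal.ofReal c < pn n x / p0 x} with hBdef
  have hAm : MeasurableSet A := measurableSet_lt measurable_const (hm1.div hm0)
  have hBm : ∀ n, MeasurableSet (B n) :=
    fun n => measurableSet_lt measurable_const ((hmn n).div hm0)
  have hp1fin : ∫⁻ x, p1 x ∂μ ≠ ∞ := by rw [hp1]; exact one_ne_top
  -- the boundary has zero mass for p1 dμ
  have hSm : MeasurableSet {x | p1 x / p0 x = ENNReal.ofReal c} :=
    (hm1.div hm0) (measurableSet_singleton _)
  have hbd : ∀ᵐ x ∂μ, p1 x / p0 x = ENNReal.ofReal c → p1 x = 0 := by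
    have h0 : ∫⁻ x in {x | p1 x / p0 x = ENNReal.ofReal c}, p1 x ∂μ = 0 := by
      rw [← withDensity_apply _ hSm]; exact hboundary
    have h2 := (lintegral_eq_zero_iff hm1).mp h0
    have h3 := (ae_restrict_iff' hSm).mp h2
    filter_upwards [h3] with x hx h using hx h
  -- Scheffé-type: ∫ (p1 - pn) → 0
  have hd : Tendsto (fun n => ∫⁻ x, (p1 x - pn n x) ∂μ) atTop (nhds 0) := by
    have h := tendsto_lintegral_of_dominated_convergence (μ := μ)
      (F := fun n x => p1 x - pn n x) (f := fun _ => 0) p1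
      (fun n => hm1.sub (hmn n)) (fun n => ae_of_all _ fun x => tsub_le_self)
      hp1fin ?_
    · simpa using h
    · filter_upwards [hconv, ae_lt_top hm1 hp1fin] with x hx hfin
      have := ENNReal.Tendsto.sub (tendsto_const_nhds (x := p1 x)) hx (Or.inl hfin.ne)
      simpa using this
  -- and ∫ (pn - p1) = ∫ (p1 - pn)
  have hde : ∀ n, ∫⁻ x, (pn n x - p1 x) ∂μ = ∫⁻ x, (p1 x - pn n x) ∂μ := by
    intro n
    have hpt : ∀ x, p1 x + (pn n x - p1 x) = pn n x + (p1 x - pn n x) := by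
      intro x
      rcases le_total (p1 x) (pn n x) with h | h
      · rw [add_tsub_cancel_of_le h, tsub_eq_zero_of_le h, add_zero]
      · rw [tsub_eq_zero_of_le h, add_zero, add_tsub_cancel_of_le h]
    have h1 : ∫⁻ x, (p1 x + (pn n x - p1 x)) ∂μ = ∫⁻ x, (pn n x + (p1 x - pn n x)) ∂μ :=
      lintegral_congr hpt
    rw [lintegral_add_left hm1, lintegral_add_left (hmn n), hp1, hpn n] at h1
    exact (ENNReal.add_right_inj one_ne_top).mp h1
  have hdfin : ∀ n, ∫⁻ x, (p1 x - pn n x) ∂μ ≠ ∞ := by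
    intro n
    exact ne_top_of_le_ne_top hp1fin (lintegral_mono fun x => tsub_le_self)
  have hefin : ∀ n, ∫⁻ x, (pn n x - p1 x) ∂μ ≠ ∞ := fun n => (hde n) ▸ hdfin n
  -- P1(B n) → P1(A)
  have hb : Tendsto (fun n => ∫⁻ x, (B n).indicator p1 x ∂μ) atTop
      (nhds (∫⁻ x, A.indicator p1 x ∂μ)) := by
    apply tendsto_lintegral_of_dominated_convergence p1
      (fun n => hm1.indicator (hBm n))
      (fun n => ae_of_all _ fun x => Set.indicator_le_self _ _ x) hp1fin
    filter_upwards [hconv, hbd] with x hx hbx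
    by_cases h0 : p1 x = 0
    · have hz : ∀ n, (B n).indicator p1 x = 0 := by
        intro n; by_cases hxm : x ∈ B n
        · rw [Set.indicator_of_mem hxm, h0]
        · rw [Set.indicator_of_notMem hxm]
      have hz2 : A.indicator p1 x = 0 := by
        by_cases hxm : x ∈ A
        · rw [Set.indicator_of_mem hxm, h0]
        · rw [Set.indicator_of_notMem hxm]
      rw [hz2]
      exact Tendsto.congr (fun n => (hz n).symm) tendsto_const_nhds
    · have hne : p1 x / p0 x ≠ ENNReal.ofReal c := fun h => h0 (hbx h)
      have hev : ∀ᶠ n in atTop, ((B n).indicator p1 x) = A.indicator p1 x := by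
        rcases eq_or_ne (p0 x) 0 with hp00 | hp0ne
        · have hxA : x ∈ A := by
            show ENNReal.ofReal c < p1 x / p0 x
            rw [hp00, ENNReal.div_zero h0]
            exact ofReal_lt_top
          filter_upwards [hx.eventually_ne h0] with n hn
          have hxB : x ∈ B n := by
            show ENNReal.ofReal c < pn n x / p0 x
            rw [hp00, ENNReal.div_zero hn]
            exact ofReal_lt_top
          rw [Set.indicator_of_mem hxB, Set.indicator_of_mem hxA]
        · have hdiv : Tendsto (fun n => pn n x / p0 x) atTop (nhds (p1 x / p0 x)) :=
            ENNReal.Tendsto.div_const hx (Or.inr hp0ne)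
          rcases lt_or_gt_of_ne hne with hlt | hgt
          · have hxA : x ∉ A := by
              show ¬ ENNReal.ofReal c < p1 x / p0 x
              exact fun h => absurd h (not_lt.mpr hlt.le)
            filter_upwards [hdiv.eventually (eventually_lt_nhds hlt)] with n hn
            have hxB : x ∉ B n := by
              show ¬ ENNReal.ofReal c < pn n x / p0 x
              exact fun h => absurd h (not_lt.mpr hn.le)
            rw [Set.indicator_of_notMem hxB, Set.indicator_of_notMem hxA]
          · have hxA : x ∈ A := hgt
            filter_upwards [hdiv.eventually (eventually_gt_nhds hgt)] with n hn
            have hxB : x ∈ B n := hn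
            rw [Set.indicator_of_mem hxB, Set.indicator_of_mem hxA]
      exact Tendsto.congr' (EventuallyEq.symm hev) tendsto_const_nhds
  -- notation for the quantities
  set a : ℕ → ℝ≥0∞ := fun n => ∫⁻ x, (B n).indicator (pn n) x ∂μ with hadef
  set b : ℕ → ℝ≥0∞ := fun n => ∫⁻ x, (B n).indicator p1 x ∂μ with hbdef
  set L : ℝ≥0∞ := ∫⁻ x, A.indicator p1 x ∂μ with hLdef
  have hLfin : L ≠ ∞ :=
    ne_top_of_le_ne_top hp1fin (lintegral_mono fun x => Set.indicator_le_self _ _ x)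
  have hbfin : ∀ n, b n ≠ ∞ := fun n =>
    ne_top_of_le_ne_top hp1fin (lintegral_mono fun x => Set.indicator_le_self _ _ x)
  have hafin : ∀ n, a n ≠ ∞ := fun n =>
    ne_top_of_le_ne_top (by rw [hpn n]; exact one_ne_top)
      (lintegral_mono fun x => Set.indicator_le_self _ _ x)
  -- comparing a and b
  have hab : ∀ n, a n ≤ b n + ∫⁻ x, (pn n x - p1 x) ∂μ := by
    intro n
    calc a n ≤ ∫⁻ x, ((B n).indicator p1 x + (pn n x - p1 x)) ∂μ := by
          apply lintegral_mono
          intro x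
          simp only [Set.indicator_apply]
          by_cases hxm : x ∈ B n
          · simp only [if_pos hxm]; exact le_add_tsub
          · simp only [if_neg hxm]; exact zero_le
      _ = b n + ∫⁻ x, (pn n x - p1 x) ∂μ :=
          lintegral_add_left (hm1.indicator (hBm n)) _
  have hba : ∀ n, b n ≤ a n + ∫⁻ x, (p1 x - pn n x) ∂μ := by
    intro n
    calc b n ≤ ∫⁻ x, ((B n).indicator (pn n) x + (p1 x - pn n x)) ∂μ := by
          apply lintegral_mono
          intro x
          simp only [Set.indicator_apply]
          by_cases hxm : x ∈ B n
          · simp only [if_pos hxm]; exact le_add_tsub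
          · simp only [if_neg hxm]; exact zero_le
      _ = a n + ∫⁻ x, (p1 x - pn n x) ∂μ :=
          lintegral_add_left ((hmn n).indicator (hBm n)) _
  -- real-valued estimates
  have habs : ∀ n, |(a n).toReal - (b n).toReal| ≤ (∫⁻ x, (p1 x - pn n x) ∂μ).toReal := by
    intro n
    rw [abs_sub_le_iff]
    constructor
    · have := ENNReal.toReal_mono
        (by exact ENNReal.add_ne_top.mpr ⟨hbfin n, hefin n⟩) (hab n)
      rw [ENNReal.toReal_add (hbfin n) (hefin n), hde n] at this
      linarith
    · have := ENNReal.toReal_mono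
        (by exact ENNReal.add_ne_top.mpr ⟨hafin n, hdfin n⟩) (hba n)
      rw [ENNReal.toReal_add (hafin n) (hdfin n)] at this
      linarith
  have hdr : Tendsto (fun n => (∫⁻ x, (p1 x - pn n x) ∂μ).toReal) atTop (nhds 0) := by
    have := (ENNReal.tendsto_toReal zero_ne_top).comp hd
    simpa [Function.comp_def] using this
  have hbr : Tendsto (fun n => (b n).toReal) atTop (nhds L.toReal) :=
    (ENNReal.tendsto_toReal hLfin).comp hb
  have hdiff : Tendsto (fun n => (a n).toReal - (b n).toReal) atTop (nhds 0) :=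
    squeeze_zero_norm habs hdr
  -- rewrite the goal
  have hgoal : ∀ n, ((μ.withDensity (pn n)) (B n)).toReal = (a n).toReal := by
    intro n
    rw [withDensity_apply _ (hBm n), hadef]
    congr 1
    exact (lintegral_indicator (hBm n) (pn n)).symm
  have hgoalL : ((μ.withDensity p1) A).toReal = L.toReal := by
    rw [withDensity_apply _ hAm, hLdef]
    congr 1
    exact (lintegral_indicator hAm p1).symm
  have : Tendsto (fun n => (a n).toReal) atTop (nhds L.toReal) := by
    have := hbr.add hdiff
    simpa using this
  rw [hgoalL]
  exact this.congr fun n => (hgoal n).symm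
end
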